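/- arXiv:2012.14302 — 10 statements merged into one kernel-verified Lean document; each statement's English description precedes it below -/
import Mathlib

section
/- Let A be a complete topological ring, B a complete topological A-algebra, and (e_i)_{i∈ℕ} a family of A-linear maps B → B satisfying e_0 = id_B and e_j ∘ e_i = binom(i+j,i)·e_{i+j} for all i,j ∈ ℕ. Then the following are equivalent: (a) each e_i is continuous, e_n(b·b') = ∑_{i+j=n} e_i(b)·e_j(b') for all b,b' ∈ B and n ∈ ℕ, and the sequence (e_i) converges continuously to the zero endomorphism of B (so that (e_i) is a topologically integrable iterated higher A-derivation of B); (b) for every b ∈ B the family (e_i(b))_{i∈ℕ} converges to 0 in B, and the resulting map e : B → B{T} defined by e(b) = ∑_{i∈ℕ} e_i(b)T^i is a continuous A-algebra homomorphism (so that e is a restricted exponential A-homomorphism). -/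
open Filter Topology

/-- A sequence of maps between topological additive groups *converges continuously*
to `f₀` if for every point `g` and every open subgroup `H'` of the target there exist an
open subgroup `H` of the source and an index `n₀` such that
`f n (g + x) - f₀ (g + x) ∈ H'` for every `x ∈ H` and every `n ≥ n₀`. -/
def ConvergesContinuouslyTo {G G' : Type*} [AddCommGroup G] [TopologicalSpace G]
    [AddCommGroup G'] [TopologicalSpace G'] (f : ℕ → G → G') (f₀ : G → G') : Prop :=
  ∀ g : G, ∀ H' : AddSubgroup G', IsOpen (H' : Set G') →
    ∃ H : AddSubgroup G, IsOpen (H : Set G) ∧ ∃ n₀ : ℕ,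
      ∀ x ∈ H, ∀ n, n₀ ≤ n → f n (g + x) - f₀ (g + x) ∈ H'

/-- A topological ring has a linear topology admitting a countable decreasing fundamental
system of open ideals starting with the whole ring. -/
def HasLinearRingTopology (A : Type*) [CommRing A] [TopologicalSpace A] : Prop :=
  ∃ a : ℕ → Ideal A, a 0 = ⊤ ∧ (∀ m n : ℕ, n ≤ m → a m ≤ a n) ∧
    (∀ n, IsOpen (a n : Set A)) ∧ ∀ s ∈ nhds (0 : A), ∃ n, (a n : Set A) ⊆ s

/-!
Continuity of `b ↦ (eᵢ b)ᵢ` into sequences with the topology of uniform convergence is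
equicontinuity of the family `(eᵢ)`. For additive maps into a group whose open subgroups form a
basis at `0`, equicontinuity means that each `eᵢ` is continuous and that, on some neighbourhood
of `0`, all `eᵢ` with `i` large take values in a given open subgroup; together with pointwise
convergence to `0` this is exactly continuous convergence to `0`.
The values `eᵢ(1)` are forced by the Leibniz rule: the generating series `∑ eᵢ(1) Tⁱ` is an
idempotent unit of `B⟦T⟧`, hence equals `1`.
-/

theorem eq_ite_of_sum_antidiagonal_mul_self {R : Type*} [Ring R] {d : ℕ → R} (h0 : d 0 = 1)
    (hd : ∀ n, d n = ∑ p ∈ Finset.HasAntidiagonal.antidiagonal n, d p.1 * d p.2) (n : ℕ) :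
    d n = if n = 0 then 1 else 0 := by
  have hunit : IsUnit (PowerSeries.mk d) :=
    PowerSeries.isUnit_iff_constantCoeff.mpr (by simp [h0])
  have hidem : IsIdempotentElem (PowerSeries.mk d) := by
    ext n
    simp [PowerSeries.coeff_mul, hd n]
  simpa [PowerSeries.coeff_one] using
    congr_arg (PowerSeries.coeff n) ((IsIdempotentElem.iff_eq_one_of_isUnit hunit).mp hidem)

theorem HasLinearRingTopology.nonarchimedeanAddGroup {R : Type*} [CommRing R]
    [TopologicalSpace R] [IsTopologicalAddGroup R] (h : HasLinearRingTopology R) :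
    NonarchimedeanAddGroup R where
  is_nonarchimedean U hU := by
    obtain ⟨a, -, -, ha_open, ha_basis⟩ := h
    obtain ⟨n, hn⟩ := ha_basis U hU
    exact ⟨⟨(a n).toAddSubgroup, ha_open n⟩, hn⟩

theorem ConvergesContinuouslyTo.tendsto_sub {G G' : Type*} [AddCommGroup G] [TopologicalSpace G]
    [AddCommGroup G'] [TopologicalSpace G'] [NonarchimedeanAddGroup G'] {f : ℕ → G → G'}
    {f₀ : G → G'} (hf : ConvergesContinuouslyTo f f₀) (g : G) :
    Tendsto (fun n => f n g - f₀ g) atTop (𝓝 0) := by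
  intro U hU
  obtain ⟨V, hVU⟩ := NonarchimedeanAddGroup.is_nonarchimedean U hU
  obtain ⟨H, -, n₀, hH⟩ := hf g V.toAddSubgroup V.isOpen
  exact mem_atTop_sets.mpr ⟨n₀, fun n hn => hVU (by simpa using hH 0 H.zero_mem n hn)⟩

section AdditiveFamily

variable {ι G G' F : Type*} [AddCommGroup G] [TopologicalSpace G] [AddCommGroup G']
  [UniformSpace G'] [IsUniformAddGroup G'] [FunLike F G G'] [AddMonoidHomClass F G G']

theorem equicontinuousAt_zero_iff_of_addMonoidHomClass {f : ι → F} :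
    EquicontinuousAt (fun i => ⇑(f i)) 0 ↔ ∀ U ∈ 𝓝 (0 : G'), ∀ᶠ x in 𝓝 0, ∀ i, f i x ∈ U := by
  rw [(𝓝 (0 : G')).basis_sets.uniformity_of_nhds_zero.equicontinuousAt_iff_right]
  simp

theorem ConvergesContinuouslyTo.equicontinuous [IsTopologicalAddGroup G]
    [NonarchimedeanAddGroup G'] {f : ℕ → F} (hcont : ∀ i, Continuous (f i))
    (hf : ConvergesContinuouslyTo (fun i g => f i g) 0) : Equicontinuous (fun i => ⇑(f i)) := by
  refine equicontinuous_of_equicontinuousAt_zero f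
    (equicontinuousAt_zero_iff_of_addMonoidHomClass.mpr fun U hU => ?_)
  obtain ⟨V, hVU⟩ := NonarchimedeanAddGroup.is_nonarchimedean U hU
  obtain ⟨H, hH, n₀, hHV⟩ := hf 0 V.toAddSubgroup V.isOpen
  have hhead : ∀ᶠ x in 𝓝 (0 : G), ∀ i ∈ Finset.range n₀, f i x ∈ U :=
    (Finset.range n₀).eventually_all.mpr fun i _ =>
      (hcont i).continuousAt.eventually_mem (by simpa using hU)
  filter_upwards [hhead, hH.mem_nhds H.zero_mem] with x hx hxH i
  rcases lt_or_ge i n₀ with hi | hi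
  · exact hx i (Finset.mem_range.mpr hi)
  · exact hVU (by simpa using hHV x hxH i hi)

theorem Equicontinuous.convergesContinuouslyTo_zero [NonarchimedeanAddGroup G] {f : ℕ → F}
    (hequi : Equicontinuous (fun i => ⇑(f i)))
    (htend : ∀ g, Tendsto (fun n => f n g) atTop (𝓝 0)) :
    ConvergesContinuouslyTo (fun i g => f i g) 0 := by
  intro g H' hH'
  have hH'0 : (H' : Set G') ∈ 𝓝 0 := hH'.mem_nhds H'.zero_mem
  obtain ⟨V, hV, hVH'⟩ :=
    (equicontinuousAt_zero_iff_of_addMonoidHomClass.mp (hequi 0) _ hH'0).exists_mem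
  obtain ⟨H, hHV⟩ := NonarchimedeanAddGroup.is_nonarchimedean V hV
  obtain ⟨n₀, hn₀⟩ := eventually_atTop.mp (htend g hH'0)
  refine ⟨H.toAddSubgroup, H.isOpen, n₀, fun x hx n hn => ?_⟩
  simpa using H'.add_mem (hn₀ n hn) (hVH' x (hHV hx) n)

end AdditiveFamily

theorem restrictedExponential_iff_topologicallyIntegrable_general
    (A B : Type*) [CommRing A]
    [CommRing B] [Algebra A B] [UniformSpace B] [IsUniformAddGroup B]
    (hB : HasLinearRingTopology B)
    (e : ℕ → B →ₗ[A] B)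
    (h0 : e 0 = LinearMap.id) :
    ((∀ i, Continuous (e i)) ∧
        (∀ (n : ℕ) (b b' : B),
          e n (b * b') = ∑ p ∈ Finset.HasAntidiagonal.antidiagonal n, e p.1 b * e p.2 b') ∧
        ConvergesContinuouslyTo (fun i b => e i b) (fun _ => 0)) ↔
      ((∀ b : B, Tendsto (fun i => e i b) atTop (nhds 0)) ∧
        (∀ i, e i (1 : B) = if i = 0 then 1 else 0) ∧
        (∀ (n : ℕ) (b b' : B),
          e n (b * b') = ∑ p ∈ Finset.HasAntidiagonal.antidiagonal n, e p.1 b * e p.2 b') ∧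
        Continuous (fun b : B => UniformFun.ofFun (fun i => e i b))) := by
  have := hB.nonarchimedeanAddGroup
  constructor
  · rintro ⟨hcont, hmul, hcc⟩
    refine ⟨fun b => by simpa using hcc.tendsto_sub b, ?_, hmul,
      equicontinuous_iff_continuous.mp (hcc.equicontinuous hcont)⟩
    exact eq_ite_of_sum_antidiagonal_mul_self (by simp [h0]) fun n => by simpa using hmul n 1 1
  · rintro ⟨htend, -, hmul, hcont⟩
    have hequi : Equicontinuous fun i => ⇑(e i) := equicontinuous_iff_continuous.mpr hcont
    exact ⟨hequi.continuous, hmul, hequi.convergesContinuouslyTo_zero htend⟩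

/-- for a family `(eᵢ)` of `A`-linear maps of `B` with `e₀ = id` and
`e_j ∘ e_i = (i+j).choose i • e_{i+j}`, being a topologically integrable iterated higher
`A`-derivation is equivalent to the associated map `b ↦ ∑ eᵢ(b) Tⁱ` landing in the ring of
restricted power series `B{T}` (i.e. coefficients tending to `0`) and being a continuous
`A`-algebra homomorphism there (continuity w.r.t. the topology of `B{T}`, induced by the
uniform convergence topology on `ℕ →ᵤ B`). -/
theorem restrictedExponential_iff_topologicallyIntegrable
    (A B : Type*) [CommRing A] [UniformSpace A] [IsUniformAddGroup A] [IsTopologicalRing A]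
    [CompleteSpace A] [T2Space A]
    [CommRing B] [Algebra A B] [UniformSpace B] [IsUniformAddGroup B] [IsTopologicalRing B]
    [CompleteSpace B] [T2Space B]
    (hA : HasLinearRingTopology A) (hB : HasLinearRingTopology B)
    (halg : Continuous (algebraMap A B))
    (e : ℕ → B →ₗ[A] B)
    (h0 : e 0 = LinearMap.id)
    (hcomp : ∀ (i j : ℕ) (b : B), e j (e i b) = (i + j).choose i • e (i + j) b) :
    ((∀ i, Continuous (e i)) ∧
        (∀ (n : ℕ) (b b' : B),
          e n (b * b') = ∑ p ∈ Finset.HasAntidiagonal.antidiagonal n, e p.1 b * e p.2 b') ∧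
        ConvergesContinuouslyTo (fun i b => e i b) (fun _ => 0)) ↔
      ((∀ b : B, Tendsto (fun i => e i b) atTop (nhds 0)) ∧
        (∀ i, e i (1 : B) = if i = 0 then 1 else 0) ∧
        (∀ (n : ℕ) (b b' : B),
          e n (b * b') = ∑ p ∈ Finset.HasAntidiagonal.antidiagonal n, e p.1 b * e p.2 b') ∧
        Continuous (fun b : B => UniformFun.ofFun (fun i => e i b))) :=
  restrictedExponential_iff_topologicallyIntegrable_general A B hB e h0
end

section
/- Let A be a complete topological ring, B a complete topological A-algebra, and (e_i)_{i∈ℕ} a restricted exponential system on B over A. Assume that B admits a fundamental system of neighborhoods of 0 consisting of open ideals all of which are prime ideals of B. Then B^e is factorially closed in B: whenever b, b' ∈ B satisfy b·b' ∈ B^e and b·b' ≠ 0, both b and b' belong to B^e. In particular, if B is not the zero ring, every invertible element of B belongs to B^e. -/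
open Filter Topology

/-- A *restricted exponential system* on a topological `A`-algebra `B`
(equivalently, a topologically integrable iterated higher `A`-derivation of `B`):
a family `(eᵢ)` of continuous `A`-module endomorphisms of `B` with `e₀ = id`,
satisfying the Leibniz rule, the iteration rule `e_j ∘ e_i = (i+j).choose i • e_{i+j}`,
and converging continuously to the zero endomorphism. -/
structure IsRestrictedExpSystem (A B : Type*) [CommRing A] [CommRing B] [Algebra A B]
    [TopologicalSpace B] (e : ℕ → B → B) : Prop where
  map_add : ∀ (i : ℕ) (b b' : B), e i (b + b') = e i b + e i b'
  map_smul : ∀ (i : ℕ) (a : A) (b : B), e i (a • b) = a • e i b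
  continuous : ∀ i, Continuous (e i)
  zeroth : ∀ b, e 0 b = b
  leibniz : ∀ (n : ℕ) (b b' : B),
    e n (b * b') = ∑ p ∈ Finset.HasAntidiagonal.antidiagonal n, e p.1 b * e p.2 b'
  comp : ∀ (i j : ℕ) (b : B), e j (e i b) = (i + j).choose i • e (i + j) b
  conv_zero : ConvergesContinuouslyTo e (fun _ => 0)

/-! Modulo an open prime `𝔭`, the exponential map `z ↦ ∑ eᵢ(z) Xⁱ` is multiplicative with values
in polynomials over the domain `B ⧸ 𝔭`, since `eᵢ(z) → 0`. If `b b'` is invariant and lies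
outside `𝔭`, the images of `b` and `b'` multiply to a nonzero constant, so both have degree `0`:
`eᵢ(b), eᵢ(b') ∈ 𝔭` for `i ≥ 1`. The open primes form a basis at `0` in a Hausdorff ring, so
`eᵢ(b) = eᵢ(b') = 0`. For a unit `u`, apply this to `u u⁻¹ = 1`, which is invariant since the
exponential series of `1` is an idempotent unit. -/

theorem ConvergesContinuouslyTo.eventually_sub_mem {G G' : Type*} [AddCommGroup G]
    [TopologicalSpace G] [AddCommGroup G'] [TopologicalSpace G'] {f : ℕ → G → G'}
    {f₀ : G → G'} (hf : ConvergesContinuouslyTo f f₀) (g : G) {H' : AddSubgroup G'}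
    (hH' : IsOpen (H' : Set G')) : ∀ᶠ n in atTop, f n g - f₀ g ∈ H' := by
  obtain ⟨H, -, n₀, h⟩ := hf g H' hH'
  exact eventually_atTop.2 ⟨n₀, fun n hn => by simpa using h 0 H.zero_mem n hn⟩

section Exponential

open PowerSeries

theorem Polynomial.natDegree_eq_zero_of_mul_eq_C {R : Type*} [CommRing R] [IsDomain R]
    {P Q : Polynomial R} {c : R} (hc : c ≠ 0) (h : P * Q = Polynomial.C c) :
    P.natDegree = 0 := by
  have hPQ : P * Q ≠ 0 := by rwa [h, Ne, Polynomial.C_eq_zero]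
  have := Polynomial.natDegree_mul (left_ne_zero_of_mul hPQ) (right_ne_zero_of_mul hPQ)
  rw [h, Polynomial.natDegree_C] at this
  omega

namespace PowerSeries

variable {R : Type*} [CommRing R]

theorem coe_trunc_of_coeff_eq_zero {φ : R⟦X⟧} {N : ℕ} (h : ∀ i, N ≤ i → coeff i φ = 0) :
    (trunc N φ : R⟦X⟧) = φ := by
  ext i
  rw [Polynomial.coeff_coe, coeff_trunc]
  split_ifs with hi
  · rfl
  · exact (h i (not_lt.1 hi)).symm

theorem coeff_eq_zero_of_mul_eq_C [IsDomain R] {φ ψ : R⟦X⟧} {c : R} (hc : c ≠ 0)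
    (h : φ * ψ = C c) {N : ℕ} (hφ : ∀ i, N ≤ i → coeff i φ = 0)
    (hψ : ∀ i, N ≤ i → coeff i ψ = 0) {i : ℕ} (hi : 0 < i) : coeff i φ = 0 := by
  have hpoly : trunc N φ * trunc N ψ = Polynomial.C c := by
    apply Polynomial.coe_injective
    rw [Polynomial.coe_mul, coe_trunc_of_coeff_eq_zero hφ, coe_trunc_of_coeff_eq_zero hψ, h,
      Polynomial.coe_C]
  rw [← coe_trunc_of_coeff_eq_zero hφ, Polynomial.coeff_coe]
  exact Polynomial.coeff_eq_zero_of_natDegree_lt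
    (by rw [Polynomial.natDegree_eq_zero_of_mul_eq_C hc hpoly]; exact hi)

end PowerSeries

variable {R S : Type*} [CommRing R] [CommRing S] {e : ℕ → R → R}

def SatisfiesHigherLeibniz (e : ℕ → R → R) : Prop :=
  ∀ (n : ℕ) (b b' : R),
    e n (b * b') = ∑ p ∈ Finset.HasAntidiagonal.antidiagonal n, e p.1 b * e p.2 b'

noncomputable def expSeries (e : ℕ → R → R) (q : R →+* S) (z : R) : S⟦X⟧ :=
  PowerSeries.mk fun i => q (e i z)

theorem expSeries_mul (hl : SatisfiesHigherLeibniz e) (q : R →+* S) (x y : R) :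
    expSeries e q (x * y) = expSeries e q x * expSeries e q y := by
  ext n
  simp [expSeries, coeff_mul, hl n x y]

theorem expSeries_one (h0 : ∀ b, e 0 b = b)
    (hl : SatisfiesHigherLeibniz e)
    (q : R →+* S) : expSeries e q 1 = 1 := by
  have hunit : IsUnit (expSeries e q 1) := by
    rw [isUnit_iff_constantCoeff]
    simp [expSeries, h0]
  rw [← hunit.mul_eq_left, ← expSeries_mul hl, one_mul]

theorem apply_one_eq_zero_of_pos (h0 : ∀ b, e 0 b = b)
    (hl : SatisfiesHigherLeibniz e)
    {i : ℕ} (hi : 0 < i) : e i 1 = 0 := by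
  simpa [expSeries, coeff_one, hi.ne'] using
    congrArg (coeff i) (expSeries_one h0 hl (RingHom.id R))

theorem apply_mem_of_mul_notMem (h0 : ∀ b, e 0 b = b)
    (hl : SatisfiesHigherLeibniz e)
    {𝔭 : Ideal R} [𝔭.IsPrime] {x y : R} (hxy : x * y ∉ 𝔭) (hinv : ∀ i, 0 < i → e i (x * y) ∈ 𝔭)
    (hx : ∀ᶠ i in atTop, e i x ∈ 𝔭) (hy : ∀ᶠ i in atTop, e i y ∈ 𝔭) {i : ℕ} (hi : 0 < i) :
    e i x ∈ 𝔭 := by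
  set q := Ideal.Quotient.mk 𝔭
  have hcoeff : ∀ j z, coeff j (expSeries e q z) = 0 ↔ e j z ∈ 𝔭 := fun j z => by
    simp [expSeries, q, Ideal.Quotient.eq_zero_iff_mem]
  have hmul : expSeries e q x * expSeries e q y = C (q (x * y)) := by
    rw [← expSeries_mul hl]
    ext (_ | j)
    · simp [expSeries, h0]
    · simpa [coeff_C, hcoeff] using hinv (j + 1) j.succ_pos
  obtain ⟨N, hN⟩ := eventually_atTop.1 (hx.and hy)
  exact (hcoeff i x).1 <| coeff_eq_zero_of_mul_eq_C
    (by rwa [Ne, Ideal.Quotient.eq_zero_iff_mem]) hmul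
    (fun j hj => (hcoeff j x).2 (hN j hj).1) (fun j hj => (hcoeff j y).2 (hN j hj).2) hi

end Exponential

theorem apply_eq_zero_of_mul {B : Type*} [CommRing B] [TopologicalSpace B] [T1Space B]
    {e : ℕ → B → B} (h0 : ∀ b, e 0 b = b)
    (hl : SatisfiesHigherLeibniz e)
    (hconv : ConvergesContinuouslyTo e fun _ => 0)
    (hprime : ∃ b : ℕ → Ideal B, (∀ n, (b n).IsPrime) ∧ (∀ n, IsOpen (b n : Set B)) ∧
      ∀ s ∈ nhds (0 : B), ∃ n, (b n : Set B) ⊆ s)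
    {x y : B} (hinv : ∀ i, 0 < i → e i (x * y) = 0) (hxy : x * y ≠ 0) {i : ℕ} (hi : 0 < i) :
    e i x = 0 := by
  obtain ⟨𝔭, h𝔭, hopen, hbasis⟩ := hprime
  by_contra hne
  obtain ⟨k, hk⟩ := hbasis _ (inter_mem (compl_singleton_mem_nhds (Ne.symm hne))
    (compl_singleton_mem_nhds (Ne.symm hxy)))
  have hsmall : ∀ z, ∀ᶠ j in atTop, e j z ∈ 𝔭 k := fun z =>
    (hconv.eventually_sub_mem z (H' := (𝔭 k).toAddSubgroup) (hopen k)).mono fun j hj => by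
      simpa using hj
  have := apply_mem_of_mul_notMem (𝔭 := 𝔭 k) h0 hl (fun h => (hk h).2 rfl)
    (fun j hj => by rw [hinv j hj]; exact zero_mem _) (hsmall x) (hsmall y) hi
  exact (hk this).1 rfl

theorem invariants_factorially_closed_general
    (A B : Type*) [CommRing A]
    [CommRing B] [Algebra A B] [UniformSpace B]
    [T2Space B]
    (hprime : ∃ b : ℕ → Ideal B, (∀ n, (b n).IsPrime) ∧ (∀ n, IsOpen (b n : Set B)) ∧
      ∀ s ∈ nhds (0 : B), ∃ n, (b n : Set B) ⊆ s)
    (e : ℕ → B → B) (he : IsRestrictedExpSystem A B e) :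
    (∀ x y : B, x * y ∈ {b : B | ∀ i, 1 ≤ i → e i b = 0} → x * y ≠ 0 →
        x ∈ {b : B | ∀ i, 1 ≤ i → e i b = 0} ∧ y ∈ {b : B | ∀ i, 1 ≤ i → e i b = 0}) ∧
      (Nontrivial B → ∀ x : B, IsUnit x → x ∈ {b : B | ∀ i, 1 ≤ i → e i b = 0}) := by
  have hclosed : ∀ x y : B, (∀ i, 1 ≤ i → e i (x * y) = 0) → x * y ≠ 0 →
      ∀ i, 1 ≤ i → e i x = 0 := fun x y hinv hxy i hi =>
    apply_eq_zero_of_mul he.zeroth he.leibniz he.conv_zero hprime hinv hxy hi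
  refine ⟨fun x y hinv hxy => ⟨hclosed x y hinv hxy, ?_⟩, fun _ x hx => ?_⟩
  · rw [mul_comm] at hinv hxy
    exact hclosed y x hinv hxy
  · obtain ⟨u, rfl⟩ := hx
    refine hclosed u ↑u⁻¹ ?_ (by rw [u.mul_inv]; exact one_ne_zero)
    rw [u.mul_inv]
    exact fun i hi => apply_one_eq_zero_of_pos he.zeroth he.leibniz hi

/-- if `B` admits a fundamental system of neighborhoods of `0` consisting of
open prime ideals, then the ring of invariants of a restricted exponential system is
factorially closed in `B`; in particular, if `B` is nontrivial every unit of `B` is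
invariant. -/
theorem invariants_factorially_closed
    (A B : Type*) [CommRing A] [UniformSpace A] [IsUniformAddGroup A] [IsTopologicalRing A]
    [CompleteSpace A] [T2Space A]
    [CommRing B] [Algebra A B] [UniformSpace B] [IsUniformAddGroup B] [IsTopologicalRing B]
    [CompleteSpace B] [T2Space B]
    (hA : HasLinearRingTopology A) (hB : HasLinearRingTopology B)
    (halg : Continuous (algebraMap A B))
    (hprime : ∃ b : ℕ → Ideal B, (∀ n, (b n).IsPrime) ∧ (∀ n, IsOpen (b n : Set B)) ∧
      ∀ s ∈ nhds (0 : B), ∃ n, (b n : Set B) ⊆ s)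
    (e : ℕ → B → B) (he : IsRestrictedExpSystem A B e) :
    (∀ x y : B, x * y ∈ {b : B | ∀ i, 1 ≤ i → e i b = 0} → x * y ≠ 0 →
        x ∈ {b : B | ∀ i, 1 ≤ i → e i b = 0} ∧ y ∈ {b : B | ∀ i, 1 ≤ i → e i b = 0}) ∧
      (Nontrivial B → ∀ x : B, IsUnit x → x ∈ {b : B | ∀ i, 1 ≤ i → e i b = 0}) :=
  invariants_factorially_closed_general A B hprime e he
end

section
/- Let A be a complete topological ring, B a complete topological A-algebra, (e_i)_{i∈ℕ} a restricted exponential system on B over A, and a ∈ B^e an invariant element. Then the family (a^i·e_i)_{i∈ℕ}, where (a^i·e_i)(b) = a^i·e_i(b) for b ∈ B, is again a restricted exponential system on B over A. -/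
open Filter Topology

/-! A restricted exponential system `(eᵢ)` is `B^e`-linear by the Leibniz rule, so multiplying
`eᵢ` by `aⁱ` for an invariant `a` preserves the Leibniz and iteration rules (the weights are
multiplicative along antidiagonals); continuous convergence to zero survives because an open
subgroup of `B` contains an open ideal, which absorbs the factors `aⁱ`. -/

theorem ConvergesContinuouslyTo.mul_left_of_hasLinearRingTopology {G B : Type*}
    [AddCommGroup G] [TopologicalSpace G] [CommRing B] [TopologicalSpace B]
    (hB : HasLinearRingTopology B) {f : ℕ → G → B}
    (hf : ConvergesContinuouslyTo f (fun _ => 0)) (c : ℕ → B) :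
    ConvergesContinuouslyTo (fun n x => c n * f n x) (fun _ => 0) := by
  obtain ⟨I, -, -, hIopen, hIbasis⟩ := hB
  intro g H' hH'
  obtain ⟨k, hIk⟩ := hIbasis H' (hH'.mem_nhds H'.zero_mem)
  obtain ⟨H, hHopen, n₀, hH⟩ := hf g (I k).toAddSubgroup (hIopen k)
  refine ⟨H, hHopen, n₀, fun x hx n hn => ?_⟩
  have hfI : f n (g + x) ∈ I k := by simpa using hH x hx n hn
  simpa using hIk ((I k).mul_mem_left (c n) hfI)

namespace IsRestrictedExpSystem

variable {A B : Type*} [CommRing A] [CommRing B] [Algebra A B] [TopologicalSpace B]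
  {e : ℕ → B → B}

theorem map_mul_of_invariant (he : IsRestrictedExpSystem A B e) {c : B}
    (hc : ∀ i, 1 ≤ i → e i c = 0) (j : ℕ) (d : B) : e j (c * d) = c * e j d := by
  rw [he.leibniz, Finset.sum_eq_single_of_mem (0, j) (by simp), he.zeroth]
  rintro ⟨p, q⟩ hpq hne
  obtain rfl | hp := Nat.eq_zero_or_pos p
  · simp_all
  · rw [hc p hp, zero_mul]

theorem map_pow_mul_of_invariant (he : IsRestrictedExpSystem A B e) {c : B}
    (hc : ∀ i, 1 ≤ i → e i c = 0) (i j : ℕ) (d : B) : e j (c ^ i * d) = c ^ i * e j d := by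
  induction i with
  | zero => simp
  | succ i ih => rw [pow_succ', mul_assoc, he.map_mul_of_invariant hc, ih, mul_assoc]

end IsRestrictedExpSystem

theorem replica_restrictedExpSystem_general
    (A B : Type*) [CommRing A]
    [CommRing B] [Algebra A B] [UniformSpace B] [IsTopologicalRing B]
    (hB : HasLinearRingTopology B)
    (e : ℕ → B → B) (he : IsRestrictedExpSystem A B e)
    (a : B) (ha : ∀ i, 1 ≤ i → e i a = 0) :
    IsRestrictedExpSystem A B (fun i b => a ^ i * e i b) := by
  constructor
  case map_add => intro i b b'; rw [he.map_add, mul_add]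
  case map_smul => intro i r b; rw [he.map_smul, mul_smul_comm]
  case continuous => exact fun i => continuous_const.mul (he.continuous i)
  case zeroth => simp [he.zeroth]
  case leibniz =>
    intro n b b'
    rw [he.leibniz, Finset.mul_sum]
    refine Finset.sum_congr rfl fun pq hpq => ?_
    rw [← Finset.HasAntidiagonal.mem_antidiagonal.mp hpq, pow_add]
    ring
  case comp =>
    intro i j b
    rw [he.map_pow_mul_of_invariant ha, he.comp, nsmul_eq_mul, nsmul_eq_mul, pow_add]
    ring
  case conv_zero => exact he.conv_zero.mul_left_of_hasLinearRingTopology hB (a ^ ·)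

/-- if `(eᵢ)` is a restricted exponential system on `B` over `A` and `a` is an
invariant element, then the family `(aⁱ·eᵢ)` is again a restricted exponential system. -/
theorem replica_restrictedExpSystem
    (A B : Type*) [CommRing A] [UniformSpace A] [IsUniformAddGroup A] [IsTopologicalRing A]
    [CompleteSpace A] [T2Space A]
    [CommRing B] [Algebra A B] [UniformSpace B] [IsUniformAddGroup B] [IsTopologicalRing B]
    [CompleteSpace B] [T2Space B]
    (hA : HasLinearRingTopology A) (hB : HasLinearRingTopology B)
    (halg : Continuous (algebraMap A B))
    (e : ℕ → B → B) (he : IsRestrictedExpSystem A B e)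
    (a : B) (ha : ∀ i, 1 ≤ i → e i a = 0) :
    IsRestrictedExpSystem A B (fun i b => a ^ i * e i b) :=
  replica_restrictedExpSystem_general A B hB e he a ha
end

section
/- Let A be a complete topological ring, let π : B → C be a surjective, open, continuous homomorphism of complete topological A-algebras, and let (e_i)_{i∈ℕ} be a restricted exponential system on B over A such that e_i(ker π) ⊆ ker π for every i ∈ ℕ. Then there exists a unique restricted exponential system (ē_i)_{i∈ℕ} on C over A such that ē_i ∘ π = π ∘ e_i for every i ∈ ℕ. -/
open Filter Topology

/-! Since `ker π` is stable under every `eᵢ`, the rule `ēᵢ (π b) = π (eᵢ b)` defines `ēᵢ`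
unambiguously on the surjection `π`, and it determines `ēᵢ`. Every algebraic axiom then
transports along `π`; continuity holds because an open continuous surjection is a quotient map,
and continuous convergence because `π` maps open subgroups to open subgroups while `π⁻¹`
pulls them back. -/

theorem ConvergesContinuouslyTo.descend {G G' H H' : Type*}
    [AddCommGroup G] [TopologicalSpace G] [AddCommGroup G'] [TopologicalSpace G']
    [AddCommGroup H] [TopologicalSpace H] [AddCommGroup H'] [TopologicalSpace H']
    {f : ℕ → G → H} {f₀ : G → H} (hf : ConvergesContinuouslyTo f f₀)
    (π : G →+ G') (hsurj : Function.Surjective π) (hopen : IsOpenMap π)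
    (φ : H →+ H') (hφ : Continuous φ) {f' : ℕ → G' → H'} {f₀' : G' → H'}
    (hf' : ∀ n x, f' n (π x) = φ (f n x)) (hf₀' : ∀ x, f₀' (π x) = φ (f₀ x)) :
    ConvergesContinuouslyTo f' f₀' := by
  intro g' U hU
  obtain ⟨g, rfl⟩ := hsurj g'
  obtain ⟨V, hVopen, n₀, hV⟩ := hf g (U.comap φ) (hU.preimage hφ)
  refine ⟨V.map π, hopen _ hVopen, n₀, ?_⟩
  rintro _ ⟨x, hx, rfl⟩ n hn
  rw [← map_add, hf', hf₀', ← map_sub]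
  exact hV x hx n hn

namespace IsRestrictedExpSystem

variable {A B C : Type*} [CommRing A] [CommRing B] [Algebra A B] [TopologicalSpace B]
  [CommRing C] [Algebra A C] {e : ℕ → B → B}

theorem factorsThrough (he : IsRestrictedExpSystem A B e) (π : B →ₐ[A] C)
    (hker : ∀ (i : ℕ) (b : B), π b = 0 → π (e i b) = 0) (i : ℕ) :
    Function.FactorsThrough (π ∘ e i) π := by
  intro b b' h
  have hsub : e i (b - b') = e i b - e i b' :=
    (AddMonoidHom.mk' (e i) (he.map_add i)).map_sub b b'
  have hdiff := hker i (b - b') (by rw [map_sub, h, sub_self])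
  rwa [hsub, map_sub, sub_eq_zero] at hdiff

variable [TopologicalSpace C]

theorem of_semiconj (he : IsRestrictedExpSystem A B e) (π : B →ₐ[A] C)
    (hsurj : Function.Surjective π) (hopen : IsOpenMap π) (hcont : Continuous π)
    {ebar : ℕ → C → C} (hcomm : ∀ (i : ℕ) (b : B), ebar i (π b) = π (e i b)) :
    IsRestrictedExpSystem A C ebar where
  map_add i := hsurj.forall₂.2 fun b b' => by
    rw [← _root_.map_add, hcomm, hcomm, hcomm, he.map_add, _root_.map_add]
  map_smul i a := hsurj.forall.2 fun b => by
    rw [← _root_.map_smul, hcomm, hcomm, he.map_smul, _root_.map_smul]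
  continuous i := by
    rw [(hopen.isQuotientMap hcont hsurj).continuous_iff]
    simpa only [Function.comp_def, hcomm] using hcont.comp (he.continuous i)
  zeroth := hsurj.forall.2 fun b => by rw [hcomm, he.zeroth]
  leibniz n := hsurj.forall₂.2 fun b b' => by
    simp only [← map_mul, hcomm, he.leibniz, map_sum]
  comp i j := hsurj.forall.2 fun b => by
    rw [hcomm, hcomm, he.comp, map_nsmul, hcomm]
  conv_zero := he.conv_zero.descend (π : B →+ C) hsurj hopen (π : B →+ C) hcont
    hcomm fun _ => (map_zero π).symm

end IsRestrictedExpSystem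

theorem restrictedExpSystem_descends_general
    (A B C : Type*) [CommRing A]
    [CommRing B] [Algebra A B] [UniformSpace B]
    [CommRing C] [Algebra A C] [UniformSpace C]
    (π : B →ₐ[A] C) (hsurj : Function.Surjective π) (hopen : IsOpenMap π)
    (hcont : Continuous π)
    (e : ℕ → B → B) (he : IsRestrictedExpSystem A B e)
    (hker : ∀ (i : ℕ) (b : B), π b = 0 → π (e i b) = 0) :
    ∃! ebar : ℕ → C → C, IsRestrictedExpSystem A C ebar ∧
      ∀ (i : ℕ) (b : B), ebar i (π b) = π (e i b) := by
  let ebar : ℕ → C → C := fun i => Function.extend π (π ∘ e i) id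
  have hcomm : ∀ (i : ℕ) (b : B), ebar i (π b) = π (e i b) := fun i =>
    (he.factorsThrough π hker i).extend_apply id
  refine ⟨ebar, ⟨he.of_semiconj π hsurj hopen hcont hcomm, hcomm⟩, ?_⟩
  rintro f ⟨-, hf⟩
  funext i c
  obtain ⟨b, rfl⟩ := hsurj c
  rw [hf, hcomm]

/-- a restricted exponential system descends uniquely along a surjective open
continuous homomorphism `π : B → C` of complete topological `A`-algebras whose kernel is
stable under all the `eᵢ`. -/
theorem restrictedExpSystem_descends
    (A B C : Type*) [CommRing A] [UniformSpace A] [IsUniformAddGroup A] [IsTopologicalRing A]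
    [CompleteSpace A] [T2Space A]
    [CommRing B] [Algebra A B] [UniformSpace B] [IsUniformAddGroup B] [IsTopologicalRing B]
    [CompleteSpace B] [T2Space B]
    [CommRing C] [Algebra A C] [UniformSpace C] [IsUniformAddGroup C] [IsTopologicalRing C]
    [CompleteSpace C] [T2Space C]
    (hA : HasLinearRingTopology A) (hB : HasLinearRingTopology B)
    (hC : HasLinearRingTopology C)
    (halgB : Continuous (algebraMap A B)) (halgC : Continuous (algebraMap A C))
    (π : B →ₐ[A] C) (hsurj : Function.Surjective π) (hopen : IsOpenMap π)
    (hcont : Continuous π)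
    (e : ℕ → B → B) (he : IsRestrictedExpSystem A B e)
    (hker : ∀ (i : ℕ) (b : B), π b = 0 → π (e i b) = 0) :
    ∃! ebar : ℕ → C → C, IsRestrictedExpSystem A C ebar ∧
      ∀ (i : ℕ) (b : B), ebar i (π b) = π (e i b) :=
  restrictedExpSystem_descends_general A B C π hsurj hopen hcont e he hker
end

section
/- Let A be a complete topological ring, B a complete topological A-algebra, and let (e_i)_{i∈ℕ} and (e'_j)_{j∈ℕ} be restricted exponential systems on B over A such that e_i ∘ e'_j = e'_j ∘ e_i for all i, j ∈ ℕ. Then the family (e''_n)_{n∈ℕ} defined by e''_n = ∑_{i+j=n} e'_j ∘ e_i is a restricted exponential system on B over A. -/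
/-!
Additivity, `A`-linearity, continuity and `e''₀ = id` are immediate. The Leibniz rule for `e''`
is that of `e` followed by that of `e'`, after regrouping the resulting four-fold antidiagonal
sum. For the iteration rule, regard the `eᵢ` and `e'ⱼ` as commuting elements of `End_A(B)`:
`e''ⱼ e''ᵢ` expands into terms `e'_c e'_γ e_a e_α = C(γ+c, γ) C(α+a, α) e'_{γ+c} e_{α+a}`, and
Vandermonde's identity `C(p+q, i) = ∑_{α+γ=i} C(p, α) C(q, γ)` regroups them into
`C(i+j, i) e''_{i+j}`. For continuous convergence, `(e'ⱼ)` is equicontinuous at `0` (each `e'ⱼ` is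
continuous, and all but finitely many map a fixed open subgroup into a given one), so the terms
`e'ⱼ eᵢ` with `i` large are small uniformly in `j`, while for the finitely many small `i` the
index `j` is large.
-/

open Filter Topology

open Finset

section Combinatorics

variable {M : Type*} [AddCommMonoid M]

theorem sum_antidiagonal_antidiagonal_transpose (n : ℕ) (f : ℕ × ℕ → ℕ × ℕ → M) :
    ∑ p ∈ antidiagonal n, ∑ q ∈ antidiagonal p.1, ∑ r ∈ antidiagonal p.2, f q r =
      ∑ p ∈ antidiagonal n, ∑ q ∈ antidiagonal p.1, ∑ r ∈ antidiagonal p.2,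
        f (q.1, r.1) (q.2, r.2) := by
  simp only [← sum_product', sum_sigma']
  apply sum_nbij' (fun ⟨_, q, r⟩ ↦ ⟨(q.1 + r.1, q.2 + r.2), (q.1, r.1), (q.2, r.2)⟩)
    (fun ⟨_, q, r⟩ ↦ ⟨(q.1 + r.1, q.2 + r.2), (q.1, r.1), (q.2, r.2)⟩) <;>
    aesop (add simp [add_assoc, add_left_comm])

theorem sum_antidiagonal_add_left_of_eq_zero {i j : ℕ} {q : ℕ × ℕ} (hq : q ∈ antidiagonal i)
    {g : ℕ × ℕ → M} (hg : ∀ p, ¬q ≤ p → g p = 0) :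
    ∑ p ∈ antidiagonal j, g (q + p) = ∑ p ∈ antidiagonal (i + j), g p := by
  rw [HasAntidiagonal.mem_antidiagonal] at hq
  rw [← sum_image fun _ _ _ _ ↦ add_left_cancel]
  refine sum_subset (fun p hp ↦ ?_) fun p hp hpq ↦ hg p fun hqp ↦ hpq ?_
  · obtain ⟨p, hpj, rfl⟩ := mem_image.mp hp
    rw [HasAntidiagonal.mem_antidiagonal] at hpj ⊢
    simp only [Prod.fst_add, Prod.snd_add]
    omega
  · rw [HasAntidiagonal.mem_antidiagonal] at hp
    rw [Prod.le_def] at hqp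
    refine mem_image.mpr ⟨(p.1 - q.1, p.2 - q.2), ?_, Prod.ext ?_ ?_⟩ <;>
      simp only [HasAntidiagonal.mem_antidiagonal, Prod.fst_add, Prod.snd_add] <;> omega

theorem sum_antidiagonal_choose_mul_choose_smul (i j : ℕ) (f : ℕ × ℕ → M) :
    ∑ p ∈ antidiagonal j, ∑ q ∈ antidiagonal i,
        ((q + p).1.choose q.1 * (q + p).2.choose q.2) • f (q + p) =
      (i + j).choose i • ∑ p ∈ antidiagonal (i + j), f p := by
  calc _ = ∑ q ∈ antidiagonal i, ∑ p ∈ antidiagonal (i + j),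
        (p.1.choose q.1 * p.2.choose q.2) • f p := by
        rw [sum_comm]
        refine sum_congr rfl fun q hq ↦ sum_antidiagonal_add_left_of_eq_zero hq
          (g := fun p ↦ (p.1.choose q.1 * p.2.choose q.2) • f p) fun p hqp ↦ ?_
        rcases not_and_or.mp (Prod.le_def.not.mp hqp) with h | h <;>
          simp [Nat.choose_eq_zero_of_lt (not_le.mp h)]
    _ = _ := by
        rw [sum_comm, smul_sum]
        refine sum_congr rfl fun p hp ↦ ?_
        rw [← sum_smul, ← Nat.add_choose_eq, HasAntidiagonal.mem_antidiagonal.mp hp]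

end Combinatorics

theorem sum_antidiagonal_mul_sum_antidiagonal_of_commute {S : Type*} [Semiring S] {x y : ℕ → S}
    (hx : ∀ i j, x j * x i = (i + j).choose i • x (i + j))
    (hy : ∀ i j, y j * y i = (i + j).choose i • y (i + j))
    (hxy : ∀ i j, Commute (x i) (y j)) (i j : ℕ) :
    (∑ p ∈ antidiagonal j, y p.2 * x p.1) * ∑ q ∈ antidiagonal i, y q.2 * x q.1 =
      (i + j).choose i • ∑ p ∈ antidiagonal (i + j), y p.2 * x p.1 := by
  rw [← sum_antidiagonal_choose_mul_choose_smul, sum_mul_sum]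
  refine sum_congr rfl fun p _ ↦ sum_congr rfl fun q _ ↦ ?_
  rw [(hxy p.1 q.2).mul_mul_mul_comm, hy, hx, smul_mul_smul_comm, mul_comm]
  rfl

def antidiagonalComp {α β γ : Type*} [AddCommMonoid γ] (e : ℕ → α → β) (e' : ℕ → β → γ)
    (n : ℕ) (a : α) : γ :=
  ∑ p ∈ antidiagonal n, e' p.2 (e p.1 a)

theorem antidiagonalComp_mul {R : Type*} [NonUnitalNonAssocSemiring R] {e : ℕ → R → R}
    {e' : ℕ → R →+ R}
    (he : ∀ n b b', e n (b * b') = ∑ p ∈ antidiagonal n, e p.1 b * e p.2 b')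
    (he' : ∀ n b b', e' n (b * b') = ∑ p ∈ antidiagonal n, e' p.1 b * e' p.2 b')
    (n : ℕ) (b b' : R) :
    antidiagonalComp e (e' ·) n (b * b') =
      ∑ p ∈ antidiagonal n,
        antidiagonalComp e (e' ·) p.1 b * antidiagonalComp e (e' ·) p.2 b' := by
  simp only [antidiagonalComp, he, map_sum, he', sum_mul_sum]
  exact sum_antidiagonal_antidiagonal_transpose n fun q r ↦ e' r.1 (e q.1 b) * e' r.2 (e q.2 b')

section ContinuousConvergence

variable {G G' G'' : Type*} [AddCommGroup G] [TopologicalSpace G] [AddCommGroup G']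
  [TopologicalSpace G'] [AddCommGroup G''] [TopologicalSpace G'']

theorem ConvergesContinuouslyTo.exists_openAddSubgroup_mapsTo {f : ℕ → G →+ G'}
    (hf : ∀ n, Continuous (f n)) (h : ConvergesContinuouslyTo (f ·) fun _ ↦ 0)
    (U : OpenAddSubgroup G') : ∃ V : OpenAddSubgroup G, ∀ n, Set.MapsTo (f n) V U := by
  obtain ⟨H, hH, n₀, hn₀⟩ := h 0 U U.isOpen
  refine ⟨⟨H, hH⟩ ⊓ (range n₀).inf fun n ↦ U.comap (f n) (hf n), fun n x hx ↦ ?_⟩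
  rw [SetLike.mem_coe, OpenAddSubgroup.mem_inf] at hx
  rcases lt_or_ge n n₀ with hn | hn
  · exact OpenAddSubgroup.mem_comap.mp (SetLike.le_def.mp (inf_le (mem_range.mpr hn)) hx.2)
  · simpa using hn₀ x hx.1 n hn

theorem ConvergesContinuouslyTo.antidiagonalComp {f : ℕ → G →+ G'} {g : ℕ → G' →+ G''}
    (hf : ∀ n, Continuous (f n)) (hg : ∀ n, Continuous (g n))
    (hf₀ : ConvergesContinuouslyTo (f ·) fun _ ↦ 0)
    (hg₀ : ConvergesContinuouslyTo (g ·) fun _ ↦ 0) :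
    ConvergesContinuouslyTo (antidiagonalComp (f ·) (g ·)) fun _ ↦ 0 := by
  intro x₀ H' hH'
  obtain ⟨U, hU⟩ := hg₀.exists_openAddSubgroup_mapsTo hg ⟨H', hH'⟩
  obtain ⟨H, hH, N, hN⟩ := hf₀ x₀ U U.isOpen
  have hK : ∀ i, ∃ K : AddSubgroup G', IsOpen (K : Set G') ∧
      ∃ M, ∀ y ∈ K, ∀ j, M ≤ j → g j (f i x₀ + y) ∈ H' := fun i ↦ by
    simpa using hg₀ (f i x₀) H' hH'
  choose K hK M hM using hK
  let V : OpenAddSubgroup G :=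
    ⟨H, hH⟩ ⊓ (range N).inf fun i ↦ OpenAddSubgroup.comap (f i) (hf i) ⟨K i, hK i⟩
  refine ⟨V, V.isOpen, N + (range N).sup M, fun x hx n hn ↦ ?_⟩
  rw [OpenAddSubgroup.mem_toAddSubgroup, OpenAddSubgroup.mem_inf] at hx
  rw [sub_zero]
  refine AddSubgroup.sum_mem _ fun p hp ↦ ?_
  rw [HasAntidiagonal.mem_antidiagonal] at hp
  rcases le_or_gt N p.1 with hpN | hpN
  · exact hU p.2 (by simpa using hN x hx.1 p.1 hpN)
  · have hxK : f p.1 x ∈ K p.1 :=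
      OpenAddSubgroup.mem_comap.mp (SetLike.le_def.mp (inf_le (mem_range.mpr hpN)) hx.2)
    have hMN : M p.1 ≤ (range N).sup M := le_sup (mem_range.mpr hpN)
    simpa using hM p.1 _ hxK p.2 (by omega)

end ContinuousConvergence

namespace IsRestrictedExpSystem

variable {A B : Type*} [CommRing A] [CommRing B] [Algebra A B] [TopologicalSpace B]
  {e : ℕ → B → B}

def toEnd (he : IsRestrictedExpSystem A B e) (i : ℕ) : Module.End A B where
  toFun := e i
  map_add' := he.map_add i
  map_smul' := he.map_smul i

@[simp]
theorem toEnd_apply (he : IsRestrictedExpSystem A B e) (i : ℕ) (b : B) : he.toEnd i b = e i b :=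
  rfl

theorem toEnd_mul_toEnd (he : IsRestrictedExpSystem A B e) (i j : ℕ) :
    he.toEnd j * he.toEnd i = (i + j).choose i • he.toEnd (i + j) :=
  LinearMap.ext (he.comp i j)

theorem comp_antidiagonalComp {e' : ℕ → B → B} (he : IsRestrictedExpSystem A B e)
    (he' : IsRestrictedExpSystem A B e') (hcomm : ∀ i j b, e i (e' j b) = e' j (e i b))
    (i j : ℕ) (b : B) :
    antidiagonalComp e e' j (antidiagonalComp e e' i b) =
      (i + j).choose i • antidiagonalComp e e' (i + j) b := by
  have h := congr($(sum_antidiagonal_mul_sum_antidiagonal_of_commute he.toEnd_mul_toEnd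
    he'.toEnd_mul_toEnd (fun i j ↦ LinearMap.ext (hcomm i j)) i j) b)
  simp only [LinearMap.coe_sum, Finset.sum_apply, Module.End.mul_apply, LinearMap.smul_apply,
    toEnd_apply] at h
  exact h

end IsRestrictedExpSystem

theorem sum_restrictedExpSystem_general
    (A B : Type*) [CommRing A]
    [CommRing B] [Algebra A B] [UniformSpace B] [IsTopologicalRing B]
    (e e' : ℕ → B → B)
    (he : IsRestrictedExpSystem A B e) (he' : IsRestrictedExpSystem A B e')
    (hcomm : ∀ (i j : ℕ) (b : B), e i (e' j b) = e' j (e i b)) :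
    IsRestrictedExpSystem A B
      (fun n b => ∑ p ∈ Finset.HasAntidiagonal.antidiagonal n, e' p.2 (e p.1 b)) := by
  exact
    { map_add := fun n b b' ↦ by simp only [he.map_add, he'.map_add, sum_add_distrib]
      map_smul := fun n a b ↦ by simp only [he.map_smul, he'.map_smul, smul_sum]
      continuous := fun n ↦
        continuous_finsetSum _ fun p _ ↦ (he'.continuous p.2).comp (he.continuous p.1)
      zeroth := fun b ↦ by simp [he.zeroth, he'.zeroth]
      leibniz := antidiagonalComp_mul (e' := fun j ↦ (he'.toEnd j).toAddMonoidHom)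
        he.leibniz he'.leibniz
      comp := he.comp_antidiagonalComp he' hcomm
      conv_zero := ConvergesContinuouslyTo.antidiagonalComp
        (f := fun i ↦ (he.toEnd i).toAddMonoidHom) (g := fun j ↦ (he'.toEnd j).toAddMonoidHom)
        he.continuous he'.continuous he.conv_zero he'.conv_zero }

/-- if `(eᵢ)` and `(e'ⱼ)` are commuting restricted exponential systems on `B`
over `A`, then `(e''ₙ)` with `e''ₙ = ∑_{i+j=n} e'ⱼ ∘ eᵢ` is again a restricted exponential
system. -/
theorem sum_restrictedExpSystem
    (A B : Type*) [CommRing A] [UniformSpace A] [IsUniformAddGroup A] [IsTopologicalRing A]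
    [CompleteSpace A] [T2Space A]
    [CommRing B] [Algebra A B] [UniformSpace B] [IsUniformAddGroup B] [IsTopologicalRing B]
    [CompleteSpace B] [T2Space B]
    (hA : HasLinearRingTopology A) (hB : HasLinearRingTopology B)
    (halg : Continuous (algebraMap A B))
    (e e' : ℕ → B → B)
    (he : IsRestrictedExpSystem A B e) (he' : IsRestrictedExpSystem A B e')
    (hcomm : ∀ (i j : ℕ) (b : B), e i (e' j b) = e' j (e i b)) :
    IsRestrictedExpSystem A B
      (fun n b => ∑ p ∈ Finset.HasAntidiagonal.antidiagonal n, e' p.2 (e p.1 b)) :=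
  sum_restrictedExpSystem_general A B e e' he he' hcomm
end

section
/- Let A be a complete topological ring and let (B_n)_{n∈ℕ} be an inverse system of complete topological A-algebras with surjective continuous transition homomorphisms p_{m,n} : B_m → B_n for all m ≥ n ≥ 0. Let B = lim_n B_n be the limit, endowed with the inverse limit topology, with canonical projections p_n : B → B_n. For each n ∈ ℕ let (e_{n,i})_{i∈ℕ} be a restricted exponential system on B_n over A such that e_{n,i} ∘ p_{m,n} = p_{m,n} ∘ e_{m,i} for all m ≥ n and all i ∈ ℕ. Then B is a complete topological A-algebra and there exists a unique restricted exponential system (e_i)_{i∈ℕ} on B over A satisfying p_n ∘ e_i = e_{n,i} ∘ p_n for all n, i ∈ ℕ. -/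
/-!
The limit `B` is the closed subalgebra of compatible families in `∏ Bₙ`, so it inherits
completeness, separation and a linear topology from the product, and its projections are onto
because elements can be lifted one level at a time along the surjective transition maps.
The exponential system on `B` is forced coordinatewise, `(eᵢ f)ₙ = e_{n,i} fₙ`, and compatibility
makes it land in the limit. Every axiom then holds coordinatewise except continuous convergence,
which holds because an open subgroup of `B` contains a basic neighbourhood involving only
finitely many coordinates, each containing an open subgroup of `Bₙ`.
-/

open Filter Topology

/-- The inverse limit of an inverse system of `A`-algebras, as a subalgebra of the
product. -/
def invLimitSubalgebra (A : Type*) [CommRing A] (B : ℕ → Type*)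
    [∀ n, CommRing (B n)] [∀ n, Algebra A (B n)]
    (p : ∀ m n : ℕ, n ≤ m → (B m →ₐ[A] B n)) : Subalgebra A (∀ n, B n) where
  carrier := {f | ∀ (m n : ℕ) (h : n ≤ m), p m n h (f m) = f n}
  mul_mem' := by
    intro f g hf hg m n h
    simp only [Pi.mul_apply, map_mul, hf m n h, hg m n h]
  one_mem' := by intro m n h; simp
  add_mem' := by
    intro f g hf hg m n h
    simp only [Pi.add_apply, map_add, hf m n h, hg m n h]
  zero_mem' := by intro m n h; simp
  algebraMap_mem' := by
    intro a m n h
    simp [Pi.algebraMap_apply]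

theorem InverseSystem.compatible_of_succ {B : ℕ → Type*} {f : ∀ ⦃i j : ℕ⦄, i ≤ j → B j → B i}
    [InverseSystem f] {g : ∀ k, B k} (hg : ∀ k, f k.le_succ (g (k + 1)) = g k) :
    ∀ ⦃i j⦄ (h : i ≤ j), f h (g j) = g i := by
  intro i j h
  induction j, h using Nat.le_induction with
  | base => exact map_self (f := f) _
  | succ j hij ih => rw [← map_map (f := f) hij j.le_succ, hg, ih]

theorem InverseSystem.exists_compatible_of_surjective {B : ℕ → Type*}
    {f : ∀ ⦃i j : ℕ⦄, i ≤ j → B j → B i} [InverseSystem f]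
    (hsurj : ∀ k : ℕ, Function.Surjective (f k.le_succ)) (n : ℕ) (b : B n) :
    ∃ g : ∀ k, B k, (∀ ⦃i j⦄ (h : i ≤ j), f h (g j) = g i) ∧ g n = b := by
  classical
  -- below `n` the family is forced; above `n` lift one step at a time
  let g : ∀ k, B k := fun k => Nat.rec (f n.zero_le b)
    (fun (k : ℕ) gk => if h : k + 1 ≤ n then f h b else Function.surjInv (hsurj k) gk) k
  have g_of_le : ∀ k (h : k ≤ n), g k = f h b := by
    rintro (_ | k) h
    · rfl
    · exact dif_pos h
  have g_succ : ∀ k, f k.le_succ (g (k + 1)) = g k := by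
    intro k
    by_cases h : k + 1 ≤ n
    · rw [g_of_le _ h, map_map (f := f), g_of_le]
    · rw [show g (k + 1) = Function.surjInv (hsurj k) (g k) from dif_neg h]
      exact Function.surjInv_eq _ _
  exact ⟨g, compatible_of_succ g_succ, by rw [g_of_le n le_rfl, map_self (f := f)]⟩

theorem HasLinearRingTopology.exists_isOpen_addSubgroup_subset {R : Type*} [CommRing R]
    [TopologicalSpace R] (hR : HasLinearRingTopology R) {s : Set R} (hs : s ∈ 𝓝 0) :
    ∃ V : AddSubgroup R, IsOpen (V : Set R) ∧ (V : Set R) ⊆ s := by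
  obtain ⟨a, -, -, ha_open, ha_basis⟩ := hR
  obtain ⟨n, hn⟩ := ha_basis s hs
  exact ⟨(a n).toAddSubgroup, ha_open n, hn⟩

theorem HasLinearRingTopology.comap {R S : Type*} [CommRing R] [TopologicalSpace R] [CommRing S]
    [TopologicalSpace S] (φ : R →+* S) (hφ : IsInducing φ) (hS : HasLinearRingTopology S) :
    HasLinearRingTopology R := by
  obtain ⟨a, ha_zero, ha_anti, ha_open, ha_basis⟩ := hS
  refine ⟨fun n => (a n).comap φ, by simp [ha_zero],
    fun m n h => Ideal.comap_mono (ha_anti m n h), fun n => (ha_open n).preimage hφ.continuous,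
    fun s hs => ?_⟩
  rw [hφ.nhds_eq_comap, map_zero] at hs
  obtain ⟨t, ht, hts⟩ := hs
  obtain ⟨n, hn⟩ := ha_basis t ht
  exact ⟨n, fun x hx => hts (hn hx)⟩

theorem HasLinearRingTopology.pi {B : ℕ → Type*} [∀ n, CommRing (B n)]
    [∀ n, TopologicalSpace (B n)] (hB : ∀ n, HasLinearRingTopology (B n)) :
    HasLinearRingTopology (∀ n, B n) := by
  choose a ha_zero ha_anti ha_open ha_basis using hB
  refine ⟨fun k => ⨅ n ∈ Finset.range k, (a n k).comap (Pi.evalRingHom B n), by simp,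
    fun m k hkm => le_iInf₂ fun n hn => (iInf₂_le n (Finset.range_mono hkm hn)).trans
      (Ideal.comap_mono (ha_anti n m k hkm)), fun k => ?_, fun s hs => ?_⟩
  · simp only [Submodule.coe_iInf, Ideal.coe_comap]
    exact isOpen_biInter_finset fun n _ => (ha_open n k).preimage (continuous_apply n)
  · rw [nhds_pi, Filter.mem_pi'] at hs
    obtain ⟨I, t, ht, hIt⟩ := hs
    choose k hk using fun i => ha_basis i (t i) (ht i)
    refine ⟨I.sup fun i => max (i + 1) (k i), fun x hx => hIt fun i hi => ?_⟩
    have hle := I.le_sup (f := fun i => max (i + 1) (k i)) hi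
    simp only [SetLike.mem_coe, Submodule.mem_iInf, Finset.mem_range, Ideal.mem_comap,
      Pi.evalRingHom_apply] at hx
    exact hk i (ha_anti i _ _ (le_of_max_le_right hle) (hx i (by omega)))

theorem ConvergesContinuouslyTo.zero_of_isInducing_pi {ι G : Type*} {B : ι → Type*}
    [AddCommGroup G] [TopologicalSpace G] [∀ i, AddCommGroup (B i)] [∀ i, TopologicalSpace (B i)]
    (π : ∀ i, G →+ B i) (hπ : IsInducing fun g i => π i g)
    (hB : ∀ i, ∀ s ∈ 𝓝 (0 : B i), ∃ V : AddSubgroup (B i), IsOpen (V : Set (B i)) ∧ (V : Set _) ⊆ s)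
    {f : ℕ → G → G} {F : ∀ i, ℕ → B i → B i} (hF : ∀ i, ConvergesContinuouslyTo (F i) fun _ => 0)
    (hfF : ∀ i j g, π i (f j g) = F i j (π i g)) : ConvergesContinuouslyTo f fun _ => 0 := by
  intro g H' hH'
  have hH'_nhds : (H' : Set G) ∈ 𝓝 0 := hH'.mem_nhds H'.zero_mem
  rw [hπ.nhds_eq_comap] at hH'_nhds
  obtain ⟨t, ht, htH'⟩ := hH'_nhds
  simp only [map_zero] at ht
  rw [← Pi.zero_def, nhds_pi, Filter.mem_pi'] at ht
  obtain ⟨I, u, hu, hIu⟩ := ht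
  choose V hV_open hVu using fun i => hB i (u i) (hu i)
  choose H hH_open n₀ hH using fun i => hF i (π i g) (V i) (hV_open i)
  refine ⟨⨅ i ∈ I, (H i).comap (π i), ?_, I.sup n₀, fun x hx j hj => ?_⟩
  · simp only [AddSubgroup.coe_iInf, AddSubgroup.coe_comap]
    exact isOpen_biInter_finset fun i _ =>
      (hH_open i).preimage ((continuous_apply i).comp hπ.continuous)
  · simp only [AddSubgroup.mem_iInf, AddSubgroup.mem_comap] at hx
    rw [sub_zero]
    refine htH' (hIu fun i hi => hVu i ?_)
    simpa [hfF] using hH i (π i x) (hx i hi) j ((I.le_sup hi).trans hj)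

section InvLimit

variable {A : Type*} [CommRing A] {B : ℕ → Type*} [∀ n, CommRing (B n)] [∀ n, Algebra A (B n)]
  {p : ∀ m n : ℕ, n ≤ m → (B m →ₐ[A] B n)}

theorem isClosed_invLimitSubalgebra [∀ n, TopologicalSpace (B n)] [∀ n, T2Space (B n)]
    (hp : ∀ m n h, Continuous (p m n h)) : IsClosed (invLimitSubalgebra A B p : Set (∀ n, B n)) := by
  show IsClosed {f : ∀ n, B n | ∀ m n h, p m n h (f m) = f n}
  simp only [Set.ofPred_forall]
  exact isClosed_iInter fun m => isClosed_iInter fun n => isClosed_iInter fun h =>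
    isClosed_eq ((hp m n h).comp (continuous_apply m)) (continuous_apply n)

def invLimitSubalgebra.map (E : ∀ n, B n → B n)
    (hE : ∀ m n h b, E n (p m n h b) = p m n h (E m b)) (f : invLimitSubalgebra A B p) :
    invLimitSubalgebra A B p :=
  ⟨fun n => E n ((f : ∀ k, B k) n), fun m n h => by rw [← hE, f.2 m n h]⟩

theorem IsRestrictedExpSystem.invLimit [∀ n, TopologicalSpace (B n)]
    (hB : ∀ n, HasLinearRingTopology (B n)) {E : ∀ n, ℕ → B n → B n}
    (hE : ∀ n, IsRestrictedExpSystem A (B n) (E n))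
    (hEp : ∀ m n h i b, E n i (p m n h b) = p m n h (E m i b)) :
    IsRestrictedExpSystem A (invLimitSubalgebra A B p)
      fun i => invLimitSubalgebra.map (fun n => E n i) fun m n h => hEp m n h i where
  map_add i b b' := Subtype.ext <| funext fun n => (hE n).map_add i _ _
  map_smul i a b := Subtype.ext <| funext fun n => (hE n).map_smul i a _
  continuous i := Continuous.subtype_mk (continuous_pi fun n =>
    ((hE n).continuous i).comp ((continuous_apply n).comp continuous_subtype_val)) _
  zeroth b := Subtype.ext <| funext fun n => (hE n).zeroth _
  leibniz k b b' := Subtype.ext <| funext fun n => by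
    rw [AddSubmonoidClass.coe_finsetSum, Finset.sum_apply]
    exact (hE n).leibniz k _ _
  comp i j b := Subtype.ext <| funext fun n => (hE n).comp i j _
  conv_zero := ConvergesContinuouslyTo.zero_of_isInducing_pi
    (fun n => (Pi.evalAddMonoidHom B n).comp (invLimitSubalgebra A B p).val.toAddMonoidHom)
    IsInducing.subtypeVal (fun n _ hs => (hB n).exists_isOpen_addSubgroup_subset hs)
    (fun n => (hE n).conv_zero) fun _ _ _ => rfl

end InvLimit

theorem restrictedExpSystem_invLimit_general
    (A : Type*) [CommRing A] [UniformSpace A]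
    (B : ℕ → Type*) [∀ n, CommRing (B n)] [∀ n, Algebra A (B n)]
    [∀ n, UniformSpace (B n)] [∀ n, IsUniformAddGroup (B n)] [∀ n, IsTopologicalRing (B n)]
    [∀ n, CompleteSpace (B n)] [∀ n, T2Space (B n)]
    (hB : ∀ n, HasLinearRingTopology (B n))
    (halg : ∀ n, Continuous (algebraMap A (B n)))
    (p : ∀ m n : ℕ, n ≤ m → (B m →ₐ[A] B n))
    (hp_id : ∀ (n : ℕ) (b : B n), p n n le_rfl b = b)
    (hp_comp : ∀ (k m n : ℕ) (hmk : m ≤ k) (hnm : n ≤ m) (b : B k),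
      p m n hnm (p k m hmk b) = p k n (le_trans hnm hmk) b)
    (hp_surj : ∀ (m n : ℕ) (h : n ≤ m), Function.Surjective (p m n h))
    (hp_cont : ∀ (m n : ℕ) (h : n ≤ m), Continuous (p m n h))
    (E : ∀ n : ℕ, ℕ → B n → B n)
    (hE : ∀ n, IsRestrictedExpSystem A (B n) (E n))
    (hEcompat : ∀ (m n : ℕ) (h : n ≤ m) (i : ℕ) (b : B m),
      E n i (p m n h b) = p m n h (E m i b)) :
    CompleteSpace (invLimitSubalgebra A B p) ∧
      T2Space (invLimitSubalgebra A B p) ∧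
      IsUniformAddGroup (invLimitSubalgebra A B p) ∧
      IsTopologicalRing (invLimitSubalgebra A B p) ∧
      HasLinearRingTopology (invLimitSubalgebra A B p) ∧
      Continuous (algebraMap A (invLimitSubalgebra A B p)) ∧
      (∀ n : ℕ, Continuous (fun f : invLimitSubalgebra A B p => (f : ∀ k, B k) n) ∧
        Function.Surjective (fun f : invLimitSubalgebra A B p => (f : ∀ k, B k) n)) ∧
      (∃! e : ℕ → invLimitSubalgebra A B p → invLimitSubalgebra A B p,
        IsRestrictedExpSystem A (invLimitSubalgebra A B p) e ∧
          ∀ (n i : ℕ) (b : invLimitSubalgebra A B p),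
            ((e i b : ∀ k, B k) n) = E n i ((b : ∀ k, B k) n)) := by
  set L := invLimitSubalgebra A B p
  have : InverseSystem fun ⦃i j : ℕ⦄ (h : i ≤ j) => ⇑(p j i h) :=
    ⟨hp_id, fun k j i hkj hji x => hp_comp i j k hji hkj x⟩
  have : CompleteSpace L := (isClosed_invLimitSubalgebra hp_cont).completeSpace_coe
  have : IsUniformAddGroup L := .comap L.val
  refine ⟨inferInstance, inferInstance, inferInstance,
    IsTopologicalSemiring.toIsTopologicalRing inferInstance,
    (HasLinearRingTopology.pi hB).comap L.val.toRingHom IsInducing.subtypeVal,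
    continuous_induced_rng.mpr (continuous_pi halg),
    fun n => ⟨(continuous_apply n).comp continuous_subtype_val, fun b => ?_⟩,
    ⟨_, ⟨IsRestrictedExpSystem.invLimit hB hE hEcompat, fun _ _ _ => rfl⟩,
      fun e ⟨_, he⟩ => funext fun i => funext fun f => Subtype.ext <| funext fun n => he n i f⟩⟩
  obtain ⟨g, hg, rfl⟩ := InverseSystem.exists_compatible_of_surjective
    (f := fun ⦃i j : ℕ⦄ (h : i ≤ j) => ⇑(p j i h)) (fun k => hp_surj (k + 1) k k.le_succ) n b
  exact ⟨⟨g, fun m n h => hg h⟩, rfl⟩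

/-- the inverse limit `B = lim_n B_n` of an inverse system of complete
topological `A`-algebras with surjective continuous transition maps, endowed with the
inverse limit topology, is a complete topological `A`-algebra (Hausdorff, complete, with a
linear topology and continuous structural morphism, the projections being continuous and
surjective), and a compatible system of restricted exponential systems on the `B_n` lifts
to a unique restricted exponential system on `B`. -/
theorem restrictedExpSystem_invLimit
    (A : Type*) [CommRing A] [UniformSpace A] [IsUniformAddGroup A] [IsTopologicalRing A]
    [CompleteSpace A] [T2Space A] (hA : HasLinearRingTopology A)
    (B : ℕ → Type*) [∀ n, CommRing (B n)] [∀ n, Algebra A (B n)]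
    [∀ n, UniformSpace (B n)] [∀ n, IsUniformAddGroup (B n)] [∀ n, IsTopologicalRing (B n)]
    [∀ n, CompleteSpace (B n)] [∀ n, T2Space (B n)]
    (hB : ∀ n, HasLinearRingTopology (B n))
    (halg : ∀ n, Continuous (algebraMap A (B n)))
    (p : ∀ m n : ℕ, n ≤ m → (B m →ₐ[A] B n))
    (hp_id : ∀ (n : ℕ) (b : B n), p n n le_rfl b = b)
    (hp_comp : ∀ (k m n : ℕ) (hmk : m ≤ k) (hnm : n ≤ m) (b : B k),
      p m n hnm (p k m hmk b) = p k n (le_trans hnm hmk) b)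
    (hp_surj : ∀ (m n : ℕ) (h : n ≤ m), Function.Surjective (p m n h))
    (hp_cont : ∀ (m n : ℕ) (h : n ≤ m), Continuous (p m n h))
    (E : ∀ n : ℕ, ℕ → B n → B n)
    (hE : ∀ n, IsRestrictedExpSystem A (B n) (E n))
    (hEcompat : ∀ (m n : ℕ) (h : n ≤ m) (i : ℕ) (b : B m),
      E n i (p m n h b) = p m n h (E m i b)) :
    CompleteSpace (invLimitSubalgebra A B p) ∧
      T2Space (invLimitSubalgebra A B p) ∧
      IsUniformAddGroup (invLimitSubalgebra A B p) ∧
      IsTopologicalRing (invLimitSubalgebra A B p) ∧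
      HasLinearRingTopology (invLimitSubalgebra A B p) ∧
      Continuous (algebraMap A (invLimitSubalgebra A B p)) ∧
      (∀ n : ℕ, Continuous (fun f : invLimitSubalgebra A B p => (f : ∀ k, B k) n) ∧
        Function.Surjective (fun f : invLimitSubalgebra A B p => (f : ∀ k, B k) n)) ∧
      (∃! e : ℕ → invLimitSubalgebra A B p → invLimitSubalgebra A B p,
        IsRestrictedExpSystem A (invLimitSubalgebra A B p) e ∧
          ∀ (n i : ℕ) (b : invLimitSubalgebra A B p),
            ((e i b : ∀ k, B k) n) = E n i ((b : ∀ k, B k) n)) :=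
  restrictedExpSystem_invLimit_general A B hB halg p hp_id hp_comp hp_surj hp_cont E hE hEcompat
end

section
/- Let A be a complete topological ring, B a complete topological A-algebra, (e_i)_{i∈ℕ} a restricted exponential system on B over A, and s ∈ B an element with e_1(s) = 1 and e_i(s) = 0 for all i ≥ 2. Then s is a regular element of B, i.e., for every b ∈ B, s·b = 0 implies b = 0. -/
open Filter Topology

theorem HasLinearRingTopology.tendsto_nhds_zero {R : Type*} [CommRing R] [TopologicalSpace R]
    (hR : HasLinearRingTopology R) {ι : Type*} {l : Filter ι} {x : ι → R}
    (hx : ∀ I : Ideal R, IsOpen (I : Set R) → ∀ᶠ i in l, x i ∈ I) : Tendsto x l (𝓝 0) := by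
  obtain ⟨a, -, -, ha_open, ha_basis⟩ := hR
  intro U hU
  obtain ⟨k, hk⟩ := ha_basis U hU
  exact (hx (a k) (ha_open k)).mono fun _ hi => hk hi

namespace IsRestrictedExpSystem

variable {A B : Type*} [CommRing A] [CommRing B] [Algebra A B] [TopologicalSpace B]
  {e : ℕ → B → B}

theorem map_zero (he : IsRestrictedExpSystem A B e) (i : ℕ) : e i 0 = 0 := by
  simpa using he.map_add i 0 0

section Slice

variable (he : IsRestrictedExpSystem A B e) {s : B} (hs1 : e 1 s = 1)
  (hs2 : ∀ i, 2 ≤ i → e i s = 0) {b : B} (hb : s * b = 0)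
include he hs1 hs2 hb

theorem eq_neg_mul_apply_succ_of_mul_eq_zero (n : ℕ) : e n b = -s * e (n + 1) b := by
  have h := he.leibniz (n + 1) s b
  rw [hb, he.map_zero, Finset.Nat.sum_antidiagonal_eq_sum_range_succ_mk,
    Finset.sum_range_succ', Finset.sum_range_succ',
    Finset.sum_eq_zero fun i _ => by rw [hs2 (i + 1 + 1) (by omega), zero_mul]] at h
  simp only [hs1, he.zeroth, one_mul, zero_add, Nat.sub_zero, Nat.add_sub_cancel] at h
  linear_combination -h

theorem eq_neg_pow_mul_apply_of_mul_eq_zero (n : ℕ) : b = (-s) ^ n * e n b := by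
  induction n with
  | zero => simp [he.zeroth]
  | succ n ih =>
    nth_rw 1 [ih]
    rw [he.eq_neg_mul_apply_succ_of_mul_eq_zero hs1 hs2 hb n]
    ring

end Slice

end IsRestrictedExpSystem

theorem slice_is_regular_general
    (A B : Type*) [CommRing A]
    [CommRing B] [Algebra A B] [UniformSpace B]
    [T2Space B]
    (hB : HasLinearRingTopology B)
    (e : ℕ → B → B) (he : IsRestrictedExpSystem A B e)
    (s : B) (hs1 : e 1 s = 1) (hs2 : ∀ i, 2 ≤ i → e i s = 0) :
    ∀ b : B, s * b = 0 → b = 0 := by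
  intro b hb
  have h_tendsto : Tendsto (fun _ : ℕ => b) atTop (𝓝 0) := by
    refine hB.tendsto_nhds_zero fun I hI => ?_
    filter_upwards [he.conv_zero.eventually_sub_mem b (H' := I.toAddSubgroup) hI] with n hn
    rw [he.eq_neg_pow_mul_apply_of_mul_eq_zero hs1 hs2 hb n]
    exact I.mul_mem_left _ (by simpa using hn)
  exact tendsto_const_nhds_iff.mp h_tendsto

/-- if a restricted exponential system `(eᵢ)` on `B` admits a slice `s`
(i.e. `e₁(s) = 1` and `eᵢ(s) = 0` for `i ≥ 2`), then `s` is a regular element of `B`. -/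
theorem slice_is_regular
    (A B : Type*) [CommRing A] [UniformSpace A] [IsUniformAddGroup A] [IsTopologicalRing A]
    [CompleteSpace A] [T2Space A]
    [CommRing B] [Algebra A B] [UniformSpace B] [IsUniformAddGroup B] [IsTopologicalRing B]
    [CompleteSpace B] [T2Space B]
    (hA : HasLinearRingTopology A) (hB : HasLinearRingTopology B)
    (halg : Continuous (algebraMap A B))
    (e : ℕ → B → B) (he : IsRestrictedExpSystem A B e)
    (s : B) (hs1 : e 1 s = 1) (hs2 : ∀ i, 2 ≤ i → e i s = 0) :
    ∀ b : B, s * b = 0 → b = 0 :=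
  slice_is_regular_general A B hB e he s hs1 hs2
end

section
/- Let A be a complete topological ring, B a complete topological A-algebra, (e_i)_{i∈ℕ} a restricted exponential system on B over A, and s ∈ B an element with e_1(s) = 1 and e_i(s) = 0 for all i ≥ 2. For every b ∈ B the family (e_i(b)·(−s)^i)_{i∈ℕ} is summable; define the Dixmier–Reynolds operator R_s : B → B by R_s(b) = ∑_{i∈ℕ} e_i(b)·(−s)^i. Then: (i) R_s is a continuous A-algebra homomorphism; (ii) R_s restricts to the identity on the ring of invariants B^e; (iii) the image of R_s equals B^e; and (iv) R_s(R_s(b)·b') = R_s(b)·R_s(b') for all b, b' ∈ B. -/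
/-!
Write `evalExp e x b = ∑ eᵢ(b) xⁱ`, the exponential `b ↦ ∑ eᵢ(b) tⁱ` evaluated at `t = x`, so
that `R_s = evalExp e (-s)`. Since `eᵢ(b) → 0` and the topology is given by open ideals, every
such series converges, and the Leibniz rule makes `evalExp e x` multiplicative (Cauchy product).
If `e₁(x) = c` and `eᵢ(x) = 0` for `i ≥ 2`, then `eₙ(xⁱ) = C(i, n) cⁿ x^(i-n)`; with the
iteration rule and a reindexing this gives `e_j (evalExp e x b) = (1 + c)ʲ · evalExp e x (e_j b)`.
For `x = -s` we have `c = -1`, so the image of `R_s` consists of invariants, on which `R_s` is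
visibly the identity; the Reynolds identity follows from `R_s ∘ R_s = R_s`.
-/

open Filter Topology

theorem Nat.choose_add_mul_choose_eq (p q k : ℕ) :
    (p + q + k).choose (k + q) * (k + q).choose q =
      (p + q).choose p * (p + q + k).choose (p + q) := by
  have h1 : (p + q + k).choose (k + q) * (k + q).choose q =
      (p + q + k).choose q * (k + p).choose k := by
    rw [Nat.choose_mul le_add_self, show p + q + k - q = k + p by omega, Nat.add_sub_cancel]
  have h2 : (p + q + k).choose (p + q) * (p + q).choose q =
      (p + q + k).choose q * (k + p).choose p := by
    rw [Nat.choose_mul le_add_self, show p + q + k - q = k + p by omega, Nat.add_sub_cancel]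
  rw [h1, Nat.choose_symm_add, ← h2, mul_comm, Nat.choose_symm_add (a := p) (b := q)]

namespace HasLinearRingTopology

section

variable {B : Type*} [CommRing B] [TopologicalSpace B]

theorem exists_isOpen_ideal_subset (h : HasLinearRingTopology B) {U : Set B} (hU : U ∈ 𝓝 0) :
    ∃ a : Ideal B, IsOpen (a : Set B) ∧ (a : Set B) ⊆ U := by
  obtain ⟨a, -, -, ha, hbasis⟩ := h
  obtain ⟨n, hn⟩ := hbasis U hU
  exact ⟨a n, ha n, hn⟩

theorem nonarchimedeanRing [IsTopologicalRing B] (h : HasLinearRingTopology B) :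
    NonarchimedeanRing B where
  is_nonarchimedean U hU := by
    obtain ⟨a, ha, haU⟩ := h.exists_isOpen_ideal_subset hU
    exact ⟨⟨a.toAddSubgroup, ha⟩, haU⟩

theorem tendsto_mul_zero (h : HasLinearRingTopology B) {ι : Type*} {l : Filter ι} {f : ι → B}
    (hf : Tendsto f l (𝓝 0)) (g : ι → B) : Tendsto (fun i => f i * g i) l (𝓝 0) := by
  intro U hU
  obtain ⟨a, ha, haU⟩ := h.exists_isOpen_ideal_subset hU
  exact (hf.eventually_mem (ha.mem_nhds a.zero_mem)).mono fun i hi => haU (a.mul_mem_right _ hi)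

end

variable {B : Type*} [CommRing B] [UniformSpace B] [IsUniformAddGroup B] [IsTopologicalRing B]
  [CompleteSpace B]

theorem summable_mul (h : HasLinearRingTopology B) {f : ℕ → B} (hf : Tendsto f atTop (𝓝 0))
    (g : ℕ → B) : Summable fun i => f i * g i :=
  have := h.nonarchimedeanRing
  NonarchimedeanAddGroup.summable_of_tendsto_cofinite_zero <|
    Nat.cofinite_eq_atTop ▸ h.tendsto_mul_zero hf g

end HasLinearRingTopology

noncomputable def evalExp {B : Type*} [CommRing B] [TopologicalSpace B] (e : ℕ → B → B)
    (x b : B) : B :=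
  ∑' i, e i b * x ^ i

namespace IsRestrictedExpSystem

section

variable {A B : Type*} [CommRing A] [CommRing B] [Algebra A B] [TopologicalSpace B]
  {e : ℕ → B → B}

def toContinuousLinearMap (he : IsRestrictedExpSystem A B e) (i : ℕ) : B →L[A] B where
  toFun := e i
  map_add' := he.map_add i
  map_smul' := he.map_smul i
  cont := he.continuous i

theorem map_neg (he : IsRestrictedExpSystem A B e) (i : ℕ) (b : B) : e i (-b) = -e i b :=
  _root_.map_neg (he.toContinuousLinearMap i) b

theorem comp_eq_mul (he : IsRestrictedExpSystem A B e) (i j : ℕ) (b : B) :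
    e j (e i b) = ((i + j).choose i : B) * e (i + j) b := by
  rw [he.comp, nsmul_eq_mul]

theorem map_one (he : IsRestrictedExpSystem A B e) {i : ℕ} (hi : 1 ≤ i) : e i 1 = 0 := by
  induction i using Nat.strong_induction_on with
  | _ i ih =>
    obtain ⟨n, rfl⟩ : ∃ n, i = n + 1 := ⟨i - 1, by omega⟩
    have h := he.leibniz (n + 1) 1 1
    rw [mul_one, Finset.Nat.sum_antidiagonal_succ, Finset.sum_eq_single (n, 0)] at h
    · simpa [he.zeroth] using h
    · rintro ⟨p, q⟩ hpq hne
      have hpq : p + q = n := Finset.HasAntidiagonal.mem_antidiagonal.mp hpq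
      rw [ih q (by omega) (by grind), mul_zero]
    · simp

theorem map_pow (he : IsRestrictedExpSystem A B e) {x c : B} (hx1 : e 1 x = c)
    (hx2 : ∀ i, 2 ≤ i → e i x = 0) (i n : ℕ) :
    e n (x ^ i) = (i.choose n : B) * c ^ n * x ^ (i - n) := by
  induction i generalizing n with
  | zero =>
    rcases n with _ | n
    · simp [he.zeroth]
    · simp [he.map_one]
  | succ i ih =>
    rcases n with _ | m
    · simp [he.zeroth]
    have h := he.leibniz (m + 1) (x ^ i) x
    rw [Finset.Nat.sum_antidiagonal_succ', Finset.sum_eq_single (m, 0)] at h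
    · rw [pow_succ, h, he.zeroth, ih, ih, zero_add, hx1, Nat.choose_succ_succ', Nat.cast_add]
      rcases lt_or_ge m i with hmi | hmi
      · rw [show i + 1 - (m + 1) = i - (m + 1) + 1 by omega,
          show i - m = i - (m + 1) + 1 by omega]
        ring
      · rw [Nat.choose_eq_zero_of_lt (by omega : i < m + 1), show i + 1 - (m + 1) = i - m by omega]
        ring
    · rintro ⟨p, q⟩ hpq hne
      have hpq : p + q = m := Finset.HasAntidiagonal.mem_antidiagonal.mp hpq
      rw [hx2 (q + 1) (by grind), mul_zero]
    · simp

theorem tendsto_zero (he : IsRestrictedExpSystem A B e) (hB : HasLinearRingTopology B) (b : B) :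
    Tendsto (fun i => e i b) atTop (𝓝 0) := by
  intro U hU
  obtain ⟨a, ha, haU⟩ := hB.exists_isOpen_ideal_subset hU
  obtain ⟨H, -, n₀, h⟩ := he.conv_zero b a.toAddSubgroup ha
  exact eventually_atTop.2 ⟨n₀, fun n hn => haU (by simpa using h 0 H.zero_mem n hn)⟩

theorem tendsto_map_map_zero (he : IsRestrictedExpSystem A B e) (hB : HasLinearRingTopology B)
    (m : ℕ) (b : B) : Tendsto (fun i => e m (e i b)) atTop (𝓝 0) := by
  refine (hB.tendsto_mul_zero ((he.tendsto_zero hB b).comp (tendsto_add_atTop_nat m))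
    fun i => ((i + m).choose i : B)).congr fun i => ?_
  rw [he.comp_eq_mul, mul_comm, Function.comp_apply]

theorem eventually_forall_mem (he : IsRestrictedExpSystem A B e) {H : AddSubgroup B}
    (hH : IsOpen (H : Set B)) : ∀ᶠ y in 𝓝 0, ∀ i, e i y ∈ H := by
  obtain ⟨V, hV, n₀, h⟩ := he.conv_zero 0 H hH
  have hlow : ∀ᶠ y in 𝓝 0, ∀ i ∈ Finset.range n₀, e i y ∈ H :=
    (Filter.eventually_all_finset _).2 fun i _ =>
      ((he.continuous i).tendsto' 0 0 (he.map_zero i)).eventually_mem (hH.mem_nhds H.zero_mem)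
  filter_upwards [hV.mem_nhds V.zero_mem, hlow] with y hyV hy i
  rcases lt_or_ge i n₀ with hi | hi
  · exact hy i (Finset.mem_range.2 hi)
  · simpa using h y hyV i hi

theorem evalExp_eq_self (he : IsRestrictedExpSystem A B e) {b : B}
    (hb : ∀ i, 1 ≤ i → e i b = 0) (x : B) : evalExp e x b = b := by
  rw [evalExp, tsum_eq_single 0 fun i hi => by rw [hb i (by omega), zero_mul], he.zeroth,
    pow_zero, mul_one]

end

section

variable {A B : Type*} [CommRing A] [CommRing B] [Algebra A B] [UniformSpace B]
  [IsUniformAddGroup B] [IsTopologicalRing B] [CompleteSpace B] {e : ℕ → B → B}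

theorem summable_mul_pow (he : IsRestrictedExpSystem A B e) (hB : HasLinearRingTopology B)
    (b x : B) : Summable fun i => e i b * x ^ i :=
  hB.summable_mul (he.tendsto_zero hB b) _

variable [T2Space B]

theorem evalExp_add (he : IsRestrictedExpSystem A B e) (hB : HasLinearRingTopology B)
    (x b b' : B) : evalExp e x (b + b') = evalExp e x b + evalExp e x b' := by
  simp only [evalExp, he.map_add, add_mul]
  exact (he.summable_mul_pow hB b x).tsum_add (he.summable_mul_pow hB b' x)

theorem evalExp_smul (he : IsRestrictedExpSystem A B e) (hB : HasLinearRingTopology B)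
    (x : B) (a : A) (b : B) : evalExp e x (a • b) = a • evalExp e x b := by
  simp_rw [evalExp, he.map_smul, Algebra.smul_def, mul_assoc]
  exact (he.summable_mul_pow hB b x).tsum_mul_left _

theorem evalExp_mul (he : IsRestrictedExpSystem A B e) (hB : HasLinearRingTopology B)
    (x b b' : B) : evalExp e x (b * b') = evalExp e x b * evalExp e x b' := by
  have := hB.nonarchimedeanRing
  have hb := he.summable_mul_pow hB b x
  have hb' := he.summable_mul_pow hB b' x
  have hprod := hb.mul_of_nonarchimedean hb'
  unfold evalExp
  rw [hb.tsum_mul_tsum_eq_tsum_sum_antidiagonal hb' hprod]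
  refine tsum_congr fun n => ?_
  rw [he.leibniz, Finset.sum_mul]
  refine Finset.sum_congr rfl fun pq hpq => ?_
  rw [← Finset.HasAntidiagonal.mem_antidiagonal.mp hpq, pow_add]
  ring

noncomputable def evalExpAlgHom (he : IsRestrictedExpSystem A B e)
    (hB : HasLinearRingTopology B) (x : B) : B →ₐ[A] B :=
  AlgHom.mk'
    { toFun := evalExp e x
      map_one' := he.evalExp_eq_self (fun _ => he.map_one) x
      map_mul' := he.evalExp_mul hB x
      map_zero' := he.evalExp_eq_self (fun i _ => he.map_zero i) x
      map_add' := he.evalExp_add hB x }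
    (he.evalExp_smul hB x)

theorem continuous_evalExp (he : IsRestrictedExpSystem A B e) (hB : HasLinearRingTopology B)
    (x : B) : Continuous (evalExp e x) := by
  refine continuous_of_continuousAt_zero (he.evalExpAlgHom hB x) fun U hU => ?_
  rw [_root_.map_zero] at hU
  obtain ⟨a, ha, haU⟩ := hB.exists_isOpen_ideal_subset hU
  have ha_closed : IsClosed (a : Set B) := AddSubgroup.isClosed_of_isOpen a.toAddSubgroup ha
  exact (he.eventually_forall_mem (H := a.toAddSubgroup) ha).mono fun y hy =>
    haU (tsum_mem ha_closed fun i => a.mul_mem_right _ (hy i))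

theorem tsum_map_mul_map_pow (he : IsRestrictedExpSystem A B e) (hB : HasLinearRingTopology B)
    {x c : B} (hx1 : e 1 x = c) (hx2 : ∀ i, 2 ≤ i → e i x = 0) (p q : ℕ) (b : B) :
    ∑' i, e p (e i b) * e q (x ^ i) = ((p + q).choose p * c ^ q) * evalExp e x (e (p + q) b) := by
  have hsupp : Function.support (fun i => e p (e i b) * e q (x ^ i)) ⊆ Set.range (· + q) :=
    Function.support_subset_iff'.2 fun i hi => by
      rw [he.map_pow hx1 hx2, Nat.choose_eq_zero_of_lt
        (lt_of_not_ge fun h => hi ⟨i - q, Nat.sub_add_cancel h⟩)]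
      simp
  rw [← (add_left_injective q).tsum_eq hsupp, evalExp,
    ← (he.summable_mul_pow hB _ x).tsum_mul_left]
  refine tsum_congr fun k => ?_
  have hc : ((p + q + k).choose (k + q) : B) * (k + q).choose q =
      (p + q).choose p * (p + q + k).choose (p + q) := by
    exact_mod_cast congrArg (Nat.cast : ℕ → B) (Nat.choose_add_mul_choose_eq p q k)
  simp only [he.comp_eq_mul, he.map_pow hx1 hx2, Nat.add_sub_cancel,
    show k + q + p = p + q + k by ring]
  linear_combination (c ^ q * e (p + q + k) b * x ^ k) * hc

theorem map_evalExp (he : IsRestrictedExpSystem A B e) (hB : HasLinearRingTopology B)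
    {x c : B} (hx1 : e 1 x = c) (hx2 : ∀ i, 2 ≤ i → e i x = 0) (j : ℕ) (b : B) :
    e j (evalExp e x b) = (1 + c) ^ j * evalExp e x (e j b) := by
  calc e j (evalExp e x b)
      = ∑' i, e j (e i b * x ^ i) :=
        (he.toContinuousLinearMap j).map_tsum (he.summable_mul_pow hB b x)
    _ = ∑ pq ∈ Finset.HasAntidiagonal.antidiagonal j,
          ∑' i, e pq.1 (e i b) * e pq.2 (x ^ i) := by
        simp_rw [he.leibniz j]
        exact Summable.tsum_finsetSum fun pq _ =>
          hB.summable_mul (he.tendsto_map_map_zero hB pq.1 b) _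
    _ = ∑ pq ∈ Finset.HasAntidiagonal.antidiagonal j,
          ((j.choose pq.1 : B) * c ^ pq.2) * evalExp e x (e j b) :=
        Finset.sum_congr rfl fun pq hpq => by
          rw [he.tsum_map_mul_map_pow hB hx1 hx2, Finset.HasAntidiagonal.mem_antidiagonal.mp hpq]
    _ = (1 + c) ^ j * evalExp e x (e j b) := by
        rw [← Finset.sum_mul, (Commute.one_left c).add_pow']
        simp [nsmul_eq_mul]

end

end IsRestrictedExpSystem

theorem dixmierReynolds_operator_general
    (A B : Type*) [CommRing A]
    [CommRing B] [Algebra A B] [UniformSpace B] [IsUniformAddGroup B] [IsTopologicalRing B]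
    [CompleteSpace B] [T2Space B]
    (hB : HasLinearRingTopology B)
    (e : ℕ → B → B) (he : IsRestrictedExpSystem A B e)
    (s : B) (hs1 : e 1 s = 1) (hs2 : ∀ i, 2 ≤ i → e i s = 0) :
    (∀ b : B, Summable fun i => e i b * (-s) ^ i) ∧
      ∃ R : B →ₐ[A] B,
        (∀ b : B, R b = ∑' i, e i b * (-s) ^ i) ∧
        Continuous R ∧
        (∀ b ∈ {b : B | ∀ i, 1 ≤ i → e i b = 0}, R b = b) ∧
        Set.range R = {b : B | ∀ i, 1 ≤ i → e i b = 0} ∧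
        (∀ b b' : B, R (R b * b') = R b * R b') := by
  have hx1 : e 1 (-s) = -1 := by rw [he.map_neg, hs1]
  have hx2 : ∀ i, 2 ≤ i → e i (-s) = 0 := fun i hi => by rw [he.map_neg, hs2 i hi, neg_zero]
  have hinv : ∀ b i, 1 ≤ i → e i (evalExp e (-s) b) = 0 := fun b i hi => by
    rw [he.map_evalExp hB hx1 hx2, add_neg_cancel, zero_pow (by omega), zero_mul]
  let R := he.evalExpAlgHom hB (-s)
  have hR : ∀ b ∈ {b : B | ∀ i, 1 ≤ i → e i b = 0}, R b = b :=
    fun _ hb => he.evalExp_eq_self hb _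
  refine ⟨fun b => he.summable_mul_pow hB b _, R, fun _ => rfl, he.continuous_evalExp hB _, hR,
    ?_, fun b b' => ?_⟩
  · exact (Set.range_subset_iff.2 hinv).antisymm fun b hb => ⟨b, hR b hb⟩
  · rw [map_mul, hR (R b) (hinv b)]

/-- given a restricted exponential system `(eᵢ)` on `B` with a slice `s`
(`e₁(s) = 1`, `eᵢ(s) = 0` for `i ≥ 2`), the families `(eᵢ(b)·(-s)ⁱ)` are summable, and the
Dixmier–Reynolds operator `R_s(b) = ∑ᵢ eᵢ(b)·(-s)ⁱ` is a continuous `A`-algebra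
homomorphism which restricts to the identity on the ring of invariants `B^e`, has image
exactly `B^e`, and satisfies the Reynolds identity `R_s(R_s(b)·b') = R_s(b)·R_s(b')`. -/
theorem dixmierReynolds_operator
    (A B : Type*) [CommRing A] [UniformSpace A] [IsUniformAddGroup A] [IsTopologicalRing A]
    [CompleteSpace A] [T2Space A]
    [CommRing B] [Algebra A B] [UniformSpace B] [IsUniformAddGroup B] [IsTopologicalRing B]
    [CompleteSpace B] [T2Space B]
    (hA : HasLinearRingTopology A) (hB : HasLinearRingTopology B)
    (halg : Continuous (algebraMap A B))
    (e : ℕ → B → B) (he : IsRestrictedExpSystem A B e)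
    (s : B) (hs1 : e 1 s = 1) (hs2 : ∀ i, 2 ≤ i → e i s = 0) :
    (∀ b : B, Summable fun i => e i b * (-s) ^ i) ∧
      ∃ R : B →ₐ[A] B,
        (∀ b : B, R b = ∑' i, e i b * (-s) ^ i) ∧
        Continuous R ∧
        (∀ b ∈ {b : B | ∀ i, 1 ≤ i → e i b = 0}, R b = b) ∧
        Set.range R = {b : B | ∀ i, 1 ≤ i → e i b = 0} ∧
        (∀ b b' : B, R (R b * b') = R b * R b') :=
  dixmierReynolds_operator_general A B hB e he s hs1 hs2
end

section
/- Let G be a topological abelian group and G' a Hausdorff topological abelian group, both with linear topologies admitting countable fundamental systems of open subgroups, and let c : G → Ĝ and c' : G' → Ĝ' be their separated completions. Let f_n : G → G' (n ∈ ℕ) be continuous homomorphisms converging continuously to a homomorphism f : G → G'. Then the sequence (c' ∘ f_n) converges continuously to c' ∘ f, and the sequence (f̂_n) of continuous homomorphisms Ĝ → Ĝ' obtained by extending the maps c' ∘ f_n through the universal property of the separated completion converges continuously to the continuous extension f̂ : Ĝ → Ĝ' of c' ∘ f. -/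
/-!
For additive maps, continuous convergence follows from continuous convergence at `0` together
with pointwise convergence on a dense subset: for `g` in the dense subset close to `gc`, the error
at `gc + y` is the error at `g` minus the error at the point `g - gc - y`, which is close to `0`.
Continuous convergence at `0` passes from `G` to the completion: the closure in `Ĝ` of an open
subgroup of `G` is open, and the estimate `f̂ₙ - f̂ ∈ K` extends from the image of the subgroup to
its closure because the open subgroup `K` is closed. The linear topology of `G'` makes the limit
`f` continuous, so that `f̂` really is its extension.
-/

open Filter Topology

/-- A sequence of maps between topological additive groups *converges pointwise* to `f₀`. -/
def ConvergesPointwiseTo {G G' : Type*} [AddCommGroup G] [TopologicalSpace G]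
    [AddCommGroup G'] [TopologicalSpace G'] (f : ℕ → G → G') (f₀ : G → G') : Prop :=
  ∀ g : G, ∀ H' : AddSubgroup G', IsOpen (H' : Set G') →
    ∃ n₀ : ℕ, ∀ n, n₀ ≤ n → f n g - f₀ g ∈ H'

/-- A topological abelian group has a linear topology admitting a countable decreasing
fundamental system of open subgroups starting with the whole group. -/
def HasLinearGroupTopology (G : Type*) [AddCommGroup G] [TopologicalSpace G] : Prop :=
  ∃ H : ℕ → AddSubgroup G, H 0 = ⊤ ∧ (∀ m n : ℕ, n ≤ m → H m ≤ H n) ∧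
    (∀ n, IsOpen (H n : Set G)) ∧ ∀ s ∈ nhds (0 : G), ∃ n, (H n : Set G) ⊆ s

def ConvergesContinuouslyAt {G G' : Type*} [AddCommGroup G] [TopologicalSpace G]
    [AddCommGroup G'] [TopologicalSpace G'] (f : ℕ → G → G') (f₀ : G → G') (g : G) : Prop :=
  ∀ H' : AddSubgroup G', IsOpen (H' : Set G') →
    ∃ H : AddSubgroup G, IsOpen (H : Set G) ∧ ∃ n₀ : ℕ,
      ∀ x ∈ H, ∀ n, n₀ ≤ n → f n (g + x) - f₀ (g + x) ∈ H'

section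

variable {G G' G'' : Type*} [AddCommGroup G] [TopologicalSpace G]
  [AddCommGroup G'] [TopologicalSpace G'] [AddCommGroup G''] [TopologicalSpace G'']

theorem ConvergesContinuouslyTo.convergesPointwiseTo {f : ℕ → G → G'} {f₀ : G → G'}
    (h : ConvergesContinuouslyTo f f₀) : ConvergesPointwiseTo f f₀ := fun g H' hH' ↦ by
  obtain ⟨H, -, n₀, hn₀⟩ := h g H' hH'
  exact ⟨n₀, fun n hn ↦ by simpa using hn₀ 0 H.zero_mem n hn⟩

theorem ConvergesContinuouslyTo.comp_addMonoidHom {f : ℕ → G → G'} {f₀ : G → G'}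
    (h : ConvergesContinuouslyTo f f₀) (φ : G' →+ G'') (hφ : Continuous φ) :
    ConvergesContinuouslyTo (fun n x ↦ φ (f n x)) (fun x ↦ φ (f₀ x)) := fun g K hK ↦ by
  obtain ⟨H, hH, n₀, hn₀⟩ := h g (K.comap φ) (hK.preimage hφ)
  exact ⟨H, hH, n₀, fun x hx n hn ↦ by simpa using hn₀ x hx n hn⟩

end

theorem HasLinearGroupTopology.nonarchimedeanAddGroup {G : Type*} [AddCommGroup G]
    [TopologicalSpace G] [IsTopologicalAddGroup G] (h : HasLinearGroupTopology G) :
    NonarchimedeanAddGroup G := by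
  obtain ⟨H, -, -, hopen, hbasis⟩ := h
  refine ⟨fun U hU ↦ ?_⟩
  obtain ⟨n, hn⟩ := hbasis U hU
  exact ⟨⟨H n, hopen n⟩, hn⟩

theorem ConvergesContinuouslyTo.continuous {G G' : Type*} [AddCommGroup G] [TopologicalSpace G]
    [IsTopologicalAddGroup G] [AddCommGroup G'] [TopologicalSpace G'] [NonarchimedeanAddGroup G']
    {f : ℕ → G →+ G'} {f₀ : G →+ G'} (h : ConvergesContinuouslyTo (fun n x ↦ f n x) f₀)
    (hf : ∀ n, Continuous (f n)) : Continuous f₀ := by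
  refine continuous_of_continuousAt_zero f₀ fun U hU ↦ mem_map.2 ?_
  rw [map_zero] at hU
  obtain ⟨V, hVU⟩ := NonarchimedeanAddGroup.is_nonarchimedean U hU
  obtain ⟨H, hH, n₀, hn₀⟩ := h 0 V V.isOpen
  have hV : (V : Set G') ∈ 𝓝 (f n₀ 0) := by simpa using V.mem_nhds_zero
  have hnhds : (H : Set G) ∩ f n₀ ⁻¹' V ∈ 𝓝 0 :=
    inter_mem (hH.mem_nhds H.zero_mem) ((hf n₀).continuousAt.preimage_mem_nhds hV)
  refine mem_of_superset hnhds fun x ⟨hxH, hxV⟩ ↦ hVU ?_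
  have hdiff : f n₀ x - f₀ x ∈ V := by simpa using hn₀ x hxH n₀ le_rfl
  simpa using V.sub_mem hxV hdiff

theorem convergesContinuouslyTo_of_denseRange {X E E' : Type*} [AddCommGroup X]
    [TopologicalSpace X] [AddCommGroup E] [TopologicalSpace E] [IsTopologicalAddGroup E]
    [AddCommGroup E'] [TopologicalSpace E'] {φ : X → E} (hφ : DenseRange φ)
    {F : ℕ → E →+ E'} {F₀ : E →+ E'}
    (hpt : ConvergesPointwiseTo (fun n x ↦ F n (φ x)) (fun x ↦ F₀ (φ x)))
    (h0 : ConvergesContinuouslyAt (fun n x ↦ F n x) F₀ 0) :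
    ConvergesContinuouslyTo (fun n x ↦ F n x) F₀ := by
  intro gc K hK
  obtain ⟨H, hH, n₀, hn₀⟩ := h0 K hK
  obtain ⟨x, hx⟩ : ∃ x, φ x - gc ∈ H :=
    hφ.exists_mem_open (hH.preimage (continuous_sub_right gc)) ⟨gc, by simp⟩
  obtain ⟨n₁, hn₁⟩ := hpt x K hK
  refine ⟨H, hH, max n₀ n₁, fun y hy n hn ↦ ?_⟩
  have hnear : F n (φ x - gc - y) - F₀ (φ x - gc - y) ∈ K := by
    simpa using hn₀ _ (H.sub_mem hx hy) n (le_of_max_le_left hn)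
  have hsplit : F n (gc + y) - F₀ (gc + y)
      = (F n (φ x) - F₀ (φ x)) - (F n (φ x - gc - y) - F₀ (φ x - gc - y)) := by
    simp only [map_sub, map_add]
    abel
  rw [hsplit]
  exact K.sub_mem (hn₁ n (le_of_max_le_right hn)) hnear

namespace UniformSpace.Completion

variable {G G' : Type*} [AddCommGroup G] [UniformSpace G] [IsUniformAddGroup G]
  [AddCommGroup G'] [UniformSpace G'] [IsUniformAddGroup G']

theorem isOpen_closure_map_toCompl {H : AddSubgroup G} (hH : IsOpen (H : Set G)) :
    IsOpen ((H.map toCompl).topologicalClosure : Set (Completion G)) := by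
  refine AddSubgroup.isOpen_of_mem_nhds _ (g := 0) ?_
  have h := (isDenseInducing_toCompl G).closure_image_mem_nhds (hH.mem_nhds H.zero_mem)
  rwa [map_zero] at h

theorem _root_.ConvergesContinuouslyAt.completion_map {f : ℕ → G → G'} {f₀ : G → G'} {g : G}
    (h : ConvergesContinuouslyAt f f₀ g) (hf : ∀ n, UniformContinuous (f n))
    (hf₀ : UniformContinuous f₀) :
    ConvergesContinuouslyAt (fun n ↦ Completion.map (f n)) (Completion.map f₀)
      (g : Completion G) := by
  intro K hK
  have hK' : IsOpen (K.comap (toCompl (α := G')) : Set G') := hK.preimage continuous_toCompl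
  obtain ⟨H, hH, n₀, hn₀⟩ := h (K.comap toCompl) hK'
  refine ⟨(H.map (toCompl (α := G))).topologicalClosure, isOpen_closure_map_toCompl hH, n₀,
    fun y hy n hn ↦ ?_⟩
  let Φ : Completion G → Completion G' := fun y ↦
    Completion.map (f n) (g + y) - Completion.map f₀ (g + y)
  have hΦ : Continuous Φ := by fun_prop
  have himage : Set.MapsTo Φ (toCompl '' H) K := by
    rintro _ ⟨x, hx, rfl⟩
    simpa [Φ, ← coe_add, map_coe (hf n), map_coe hf₀, coe_sub] using hn₀ x hx n hn
  rw [← SetLike.mem_coe, AddSubgroup.topologicalClosure_coe, AddSubgroup.coe_map] at hy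
  exact (K.isClosed_of_isOpen hK).closure_subset (himage.closure hΦ hy)

end UniformSpace.Completion

open UniformSpace in
theorem convergesContinuously_completion_general
    (G G' : Type*) [AddCommGroup G] [UniformSpace G] [IsUniformAddGroup G]
    [AddCommGroup G'] [UniformSpace G'] [IsUniformAddGroup G']
    (hG' : HasLinearGroupTopology G')
    (f : ℕ → G →+ G') (hf : ∀ n, Continuous (f n)) (f₀ : G →+ G')
    (hconv : ConvergesContinuouslyTo (fun n x => f n x) f₀) :
    ConvergesContinuouslyTo (fun n x => ((f n x : G') : Completion G'))
        (fun x => ((f₀ x : G') : Completion G')) ∧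
      ConvergesContinuouslyTo (fun n => Completion.map (f n)) (Completion.map f₀) := by
  have hcoe := hconv.comp_addMonoidHom Completion.toCompl Completion.continuous_toCompl
  refine ⟨hcoe, ?_⟩
  have := hG'.nonarchimedeanAddGroup
  have hf₀ : Continuous f₀ := hconv.continuous hf
  have hpt : ConvergesPointwiseTo (fun n (x : G) ↦ (f n).completion (hf n) x)
      (fun x ↦ f₀.completion hf₀ x) := by
    simp only [AddMonoidHom.completion_coe]
    exact hcoe.convergesPointwiseTo
  have h0 := ConvergesContinuouslyAt.completion_map (hconv 0)
    (fun n ↦ uniformContinuous_addMonoidHom_of_continuous (hf n))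
    (uniformContinuous_addMonoidHom_of_continuous hf₀)
  exact convergesContinuouslyTo_of_denseRange (F := fun n ↦ (f n).completion (hf n))
    (F₀ := f₀.completion hf₀) Completion.denseRange_coe hpt h0

open UniformSpace in
/-- continuous convergence is preserved by composing with the separated
completion map of the target and by extending to the separated completions: if `(fₙ)`
converges continuously to `f`, then `(c' ∘ fₙ)` converges continuously to `c' ∘ f`, and
the extensions `f̂ₙ : Ĝ → Ĝ'` converge continuously to `f̂`. -/
theorem convergesContinuously_completion
    (G G' : Type*) [AddCommGroup G] [UniformSpace G] [IsUniformAddGroup G]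
    [AddCommGroup G'] [UniformSpace G'] [IsUniformAddGroup G'] [T2Space G']
    (hG : HasLinearGroupTopology G) (hG' : HasLinearGroupTopology G')
    (f : ℕ → G →+ G') (hf : ∀ n, Continuous (f n)) (f₀ : G →+ G')
    (hconv : ConvergesContinuouslyTo (fun n x => f n x) f₀) :
    ConvergesContinuouslyTo (fun n x => ((f n x : G') : Completion G'))
        (fun x => ((f₀ x : G') : Completion G')) ∧
      ConvergesContinuouslyTo (fun n => Completion.map (f n)) (Completion.map f₀) :=
  convergesContinuously_completion_general G G' hG' f hf f₀ hconv
end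

section
/- Let (G_n)_{n∈ℕ} be an inverse system of complete Hausdorff topological abelian groups, each with a linear topology admitting a countable fundamental system of open subgroups, with continuous surjective transition homomorphisms p_{m,n} : G_m → G_n for all m ≥ n ≥ 0. Then the limit G = lim_n G_n, endowed with the inverse limit topology, is a complete Hausdorff topological abelian group with a linear topology admitting a countable fundamental system of open subgroups, and each canonical projection p̂_n : G → G_n is a surjective continuous homomorphism. -/
open Filter Topology

/-- The inverse limit of an inverse system of abelian groups, as a subgroup of the
product. -/
def invLimitAddSubgroup (G : ℕ → Type*) [∀ n, AddCommGroup (G n)]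
    (p : ∀ m n : ℕ, n ≤ m → (G m →+ G n)) : AddSubgroup (∀ n, G n) where
  carrier := {f | ∀ (m n : ℕ) (h : n ≤ m), p m n h (f m) = f n}
  zero_mem' := by intro m n h; simp
  add_mem' := by
    intro f g hf hg m n h
    simp only [Pi.add_apply, map_add, hf m n h, hg m n h]
  neg_mem' := by
    intro f hf m n h
    simp only [Pi.neg_apply, map_neg, hf m n h]

/-! The inverse limit is a closed subgroup of the product `∀ n, G n` (the transition maps
are continuous and the factors Hausdorff), hence complete. If `H k m` are fundamental
systems of the factors, the subgroups `{f | ∀ k ≤ m, f k ∈ H k m}` form one of the product,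
and it restricts to any subgroup. An element of `G n` lifts to the limit by choosing
preimages one step at a time along the surjections `G (m + 1) → G m`. -/

namespace HasLinearGroupTopology

theorem addSubgroup {G : Type*} [AddCommGroup G] [TopologicalSpace G]
    (hG : HasLinearGroupTopology G) (S : AddSubgroup G) : HasLinearGroupTopology S := by
  obtain ⟨H, h0, hmono, hopen, hbasis⟩ := hG
  refine ⟨fun n => (H n).comap S.subtype, by simp [h0],
    fun m n h => AddSubgroup.comap_mono (hmono m n h),
    fun n => (hopen n).preimage continuous_subtype_val, fun s hs => ?_⟩
  obtain ⟨t, ht, hts⟩ := (mem_nhds_subtype _ _ _).mp hs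
  obtain ⟨n, hn⟩ := hbasis t ht
  exact ⟨n, fun x hx => hts (hn hx)⟩

theorem pi {G : ℕ → Type*} [∀ n, AddCommGroup (G n)] [∀ n, TopologicalSpace (G n)]
    (hG : ∀ n, HasLinearGroupTopology (G n)) : HasLinearGroupTopology (∀ n, G n) := by
  choose H h0 hmono hopen hbasis using hG
  refine ⟨fun m => ⨅ (k) (_ : k ≤ m), (H k m).comap (Pi.evalAddMonoidHom G k),
    ?_, ?_, ?_, ?_⟩
  · simp [h0]
  · intro m n hnm
    exact iInf₂_mono' fun k hk => ⟨k, hk.trans hnm, AddSubgroup.comap_mono (hmono k m n hnm)⟩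
  · intro m
    simp only [AddSubgroup.coe_iInf, AddSubgroup.coe_comap]
    exact (Set.finite_Iic m).isOpen_biInter fun k _ => (hopen k m).preimage (continuous_apply k)
  · intro s hs
    obtain ⟨I, hI, t, ht, hts⟩ := mem_pi.mp (nhds_pi (a := (0 : ∀ n, G n)) ▸ hs)
    choose N hN using fun i => hbasis i (t i) (ht i)
    obtain ⟨m, hm⟩ := (hI.image fun i => max i (N i)).bddAbove
    refine ⟨m, fun f hf => hts fun i hi => hN i ?_⟩
    have hmi : max i (N i) ≤ m := hm ⟨i, hi, rfl⟩
    simp only [SetLike.mem_coe, AddSubgroup.mem_iInf] at hf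
    exact hmono i m (N i) (le_of_max_le_right hmi) (hf i (le_of_max_le_left hmi))

end HasLinearGroupTopology

section InverseLimit

variable {G : ℕ → Type*} [∀ n, AddCommGroup (G n)]
  (p : ∀ m n : ℕ, n ≤ m → (G m →+ G n))

theorem isClosed_invLimitAddSubgroup [∀ n, TopologicalSpace (G n)] [∀ n, T2Space (G n)]
    (hp_cont : ∀ (m n : ℕ) (h : n ≤ m), Continuous (p m n h)) :
    IsClosed (invLimitAddSubgroup G p : Set (∀ n, G n)) := by
  change IsClosed {f : ∀ n, G n | ∀ m n h, p m n h (f m) = f n}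
  simp only [Set.ofPred_forall]
  exact isClosed_iInter fun m => isClosed_iInter fun n => isClosed_iInter fun h =>
    isClosed_eq ((hp_cont m n h).comp (continuous_apply m)) (continuous_apply n)

theorem mem_invLimitAddSubgroup_of_succ (hp_id : ∀ (n : ℕ) (g : G n), p n n le_rfl g = g)
    (hp_comp : ∀ (k m n : ℕ) (hmk : m ≤ k) (hnm : n ≤ m) (g : G k),
      p m n hnm (p k m hmk g) = p k n (le_trans hnm hmk) g)
    {f : ∀ n, G n} (hf : ∀ m, p (m + 1) m m.le_succ (f (m + 1)) = f m) :
    f ∈ invLimitAddSubgroup G p := by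
  intro m n hnm
  induction m, hnm using Nat.le_induction with
  | base => exact hp_id n (f n)
  | succ m hnm ih => rw [← hp_comp (m + 1) m n m.le_succ hnm, hf, ih]

noncomputable def liftFamily
    (hp_surj : ∀ m, Function.Surjective (p (m + 1) m m.le_succ)) (n : ℕ) (g : G n) :
    ∀ m, G m
  | 0 => p n 0 n.zero_le g
  | m + 1 => if h : m + 1 ≤ n then p n (m + 1) h g
      else Function.surjInv (hp_surj m) (liftFamily hp_surj n g m)

variable {p}

theorem liftFamily_of_le (hp_surj : ∀ m, Function.Surjective (p (m + 1) m m.le_succ))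
    (n : ℕ) (g : G n) : ∀ m (h : m ≤ n), liftFamily p hp_surj n g m = p n m h g
  | 0, _ => rfl
  | m + 1, h => by rw [liftFamily, dif_pos h]

theorem liftFamily_succ (hp_comp : ∀ (k m n : ℕ) (hmk : m ≤ k) (hnm : n ≤ m) (g : G k),
      p m n hnm (p k m hmk g) = p k n (le_trans hnm hmk) g)
    (hp_surj : ∀ m, Function.Surjective (p (m + 1) m m.le_succ)) (n : ℕ) (g : G n) (m : ℕ) :
    p (m + 1) m m.le_succ (liftFamily p hp_surj n g (m + 1)) = liftFamily p hp_surj n g m := by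
  by_cases h : m + 1 ≤ n
  · rw [liftFamily_of_le hp_surj n g (m + 1) h, hp_comp,
      liftFamily_of_le hp_surj n g m (m.le_succ.trans h)]
  · rw [liftFamily, dif_neg h]
    exact Function.surjInv_eq (hp_surj m) _

theorem surjective_invLimitAddSubgroup_apply (hp_id : ∀ (n : ℕ) (g : G n), p n n le_rfl g = g)
    (hp_comp : ∀ (k m n : ℕ) (hmk : m ≤ k) (hnm : n ≤ m) (g : G k),
      p m n hnm (p k m hmk g) = p k n (le_trans hnm hmk) g)
    (hp_surj : ∀ m, Function.Surjective (p (m + 1) m m.le_succ)) (n : ℕ) :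
    Function.Surjective (fun f : invLimitAddSubgroup G p => (f : ∀ k, G k) n) := fun g =>
  ⟨⟨liftFamily p hp_surj n g,
      mem_invLimitAddSubgroup_of_succ p hp_id hp_comp (liftFamily_succ hp_comp hp_surj n g)⟩,
    (liftFamily_of_le hp_surj n g n le_rfl).trans (hp_id n g)⟩

end InverseLimit

/-- the inverse limit of an inverse system of complete Hausdorff linearly
topologized abelian groups with continuous surjective transition maps, endowed with the
inverse limit topology, is a complete Hausdorff linearly topologized abelian group, and
the canonical projections are continuous and surjective. -/
theorem invLimit_complete_linearly_topologized
    (G : ℕ → Type*) [∀ n, AddCommGroup (G n)] [∀ n, UniformSpace (G n)]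
    [∀ n, IsUniformAddGroup (G n)] [∀ n, CompleteSpace (G n)] [∀ n, T2Space (G n)]
    (hG : ∀ n, HasLinearGroupTopology (G n))
    (p : ∀ m n : ℕ, n ≤ m → (G m →+ G n))
    (hp_id : ∀ (n : ℕ) (g : G n), p n n le_rfl g = g)
    (hp_comp : ∀ (k m n : ℕ) (hmk : m ≤ k) (hnm : n ≤ m) (g : G k),
      p m n hnm (p k m hmk g) = p k n (le_trans hnm hmk) g)
    (hp_cont : ∀ (m n : ℕ) (h : n ≤ m), Continuous (p m n h))
    (hp_surj : ∀ (m n : ℕ) (h : n ≤ m), Function.Surjective (p m n h)) :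
    CompleteSpace (invLimitAddSubgroup G p) ∧
      T2Space (invLimitAddSubgroup G p) ∧
      IsUniformAddGroup (invLimitAddSubgroup G p) ∧
      HasLinearGroupTopology (invLimitAddSubgroup G p) ∧
      ∀ n : ℕ, Continuous (fun f : invLimitAddSubgroup G p => (f : ∀ k, G k) n) ∧
        Function.Surjective (fun f : invLimitAddSubgroup G p => (f : ∀ k, G k) n) :=
  ⟨(isClosed_invLimitAddSubgroup p hp_cont).completeSpace_coe, inferInstance, inferInstance,
    (HasLinearGroupTopology.pi hG).addSubgroup _, fun n =>
    ⟨(continuous_apply n).comp continuous_subtype_val,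
      surjective_invLimitAddSubgroup_apply hp_id hp_comp (fun m => hp_surj (m + 1) m _) n⟩⟩
end
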